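/- arXiv:2603.26048 — 6 statements merged into one kernel-verified Lean document; each statement's English description precedes it below -/
import Mathlib

section
/- Let (Ω, μ) be a probability space and X : Ω → (Fin D → ℝ) a random vector whose law is the D-fold product of the standard Gaussian measure on ℝ. Let ε : Ω → ℝ be integrable with ∫ ε dμ = 0, and assume X and ε are independent (IndepFun X ε). Let P be a D × R real matrix, g : Fin R → ℝ, and define y(ω) = ∑ c, (Pᵀ.mulVec (X ω)) c * g c + ε ω. Then for every c : Fin R, ∫ (Pᵀ.mulVec (X ω)) c * y(ω) dμ(ω) = ((Pᵀ * P).mulVec g) c; that is, E[φ(X)·y] = (PᵀP) g. -/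
open MeasureTheory ProbabilityTheory Matrix
open scoped BigOperators

section EtaAux
open Real Set Filter
open scoped ENNReal NNReal

section PiProd

variable {ν : Measure ℝ} [IsProbabilityMeasure ν]

theorem my_integrable_pi_prod : ∀ {n : ℕ} {f : Fin n → ℝ → ℝ},
    (∀ i, Integrable (f i) ν) →
    Integrable (fun x : Fin n → ℝ => ∏ i, f i (x i)) (Measure.pi fun _ => ν) := by
  intro n
  induction n with
  | zero =>
      intro f hf
      simpa using (integrable_const (μ := Measure.pi fun _ : Fin 0 => ν) (c := (1:ℝ)))
  | succ n ih =>
      intro f hf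
      have hmp := (MeasureTheory.measurePreserving_piFinSuccAbove
        (fun _ : Fin (n+1) => ν) 0).symm
      rw [← hmp.integrable_comp_emb (MeasurableEquiv.measurableEmbedding _)]
      simp_rw [MeasurableEquiv.piFinSuccAbove_symm_apply, Fin.insertNthEquiv,
        Fin.prod_univ_succ, Fin.insertNth_zero]
      simp only [Fin.zero_succAbove, Function.comp_def, Fin.cons_zero, Fin.cons_succ, cast_eq,
        Equiv.coe_fn_mk]
      exact Integrable.mul_prod (hf 0) (ih (fun i => hf _))

theorem my_integral_pi_prod : ∀ {n : ℕ} (f : Fin n → ℝ → ℝ),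
    ∫ x : Fin n → ℝ, ∏ i, f i (x i) ∂(Measure.pi fun _ => ν) = ∏ i, ∫ t, f i t ∂ν := by
  intro n
  induction n with
  | zero => intro f; simp
  | succ n ih =>
      intro f
      rw [← ((MeasureTheory.measurePreserving_piFinSuccAbove
        (fun _ : Fin (n+1) => ν) 0).symm).integral_comp']
      simp_rw [MeasurableEquiv.piFinSuccAbove_symm_apply, Fin.insertNthEquiv,
        Fin.prod_univ_succ, Fin.insertNth_zero]
      simp only [Fin.zero_succAbove, Function.comp_def, Fin.cons_zero, Fin.cons_succ, cast_eq,
        Equiv.coe_fn_mk]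
      rw [integral_prod_mul (f := f 0) (g := fun y : Fin n → ℝ => ∏ i : Fin n, f i.succ (y i)),
        ih]

end PiProd

section Eval

variable {ν : Measure ℝ} [IsProbabilityMeasure ν]

theorem my_prod_eq_single {n : ℕ} (i : Fin n) (F : ℝ → ℝ) (x : Fin n → ℝ) :
    (∏ k, (if k = i then F else fun _ => (1:ℝ)) (x k)) = F (x i) := by
  rw [Finset.prod_eq_single i]
  · simp
  · intro k _ hk; simp [hk]
  · simp

theorem my_integrable_comp_eval {n : ℕ} {F : ℝ → ℝ} (hF : Integrable F ν) (i : Fin n) :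
    Integrable (fun x : Fin n → ℝ => F (x i)) (Measure.pi fun _ => ν) := by
  have h := my_integrable_pi_prod (ν := ν)
    (f := fun k => if k = i then F else fun _ => (1:ℝ))
    (fun k => by by_cases hk : k = i <;> simp [hk, hF, integrable_const])
  simpa only [my_prod_eq_single] using h

theorem my_integral_comp_eval {n : ℕ} (F : ℝ → ℝ) (i : Fin n) :
    ∫ x : Fin n → ℝ, F (x i) ∂(Measure.pi fun _ => ν) = ∫ t, F t ∂ν := by
  have h := my_integral_pi_prod (ν := ν)
    (f := fun k => if k = i then F else fun _ => (1:ℝ))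
  simp only [my_prod_eq_single] at h
  rw [h, Finset.prod_eq_single i]
  · simp
  · intro k _ hk; simp [hk]
  · simp

theorem my_prod_eq_pair {n : ℕ} {i j : Fin n} (hij : i ≠ j) (F G : ℝ → ℝ) (x : Fin n → ℝ) :
    (∏ k, (if k = i then F else if k = j then G else fun _ => (1:ℝ)) (x k))
      = F (x i) * G (x j) := by
  rw [← Finset.mul_prod_erase Finset.univ _ (Finset.mem_univ i),
    ← Finset.mul_prod_erase _ _ (Finset.mem_erase.2 ⟨hij.symm, Finset.mem_univ j⟩),
    Finset.prod_eq_one, if_pos rfl, if_neg hij.symm, if_pos rfl, mul_one]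
  intro k hk
  rw [Finset.mem_erase, Finset.mem_erase] at hk
  simp [hk.1, hk.2.1]

theorem my_integrable_eval_mul_eval {n : ℕ} {i j : Fin n} (hij : i ≠ j) {F G : ℝ → ℝ}
    (hF : Integrable F ν) (hG : Integrable G ν) :
    Integrable (fun x : Fin n → ℝ => F (x i) * G (x j)) (Measure.pi fun _ => ν) := by
  have h := my_integrable_pi_prod (ν := ν)
    (f := fun k => if k = i then F else if k = j then G else fun _ => (1:ℝ))
    (fun k => by
      by_cases hk : k = i
      · simpa [hk] using hF
      · by_cases hk' : k = j
        · simpa [hk, hk', hij.symm] using hG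
        · simpa [hk, hk'] using (integrable_const (μ := ν) (c := (1:ℝ))))
  simpa only [my_prod_eq_pair hij] using h

theorem my_integral_eval_mul_eval {n : ℕ} {i j : Fin n} (hij : i ≠ j) (F G : ℝ → ℝ) :
    ∫ x : Fin n → ℝ, F (x i) * G (x j) ∂(Measure.pi fun _ => ν)
      = (∫ t, F t ∂ν) * ∫ t, G t ∂ν := by
  have h := my_integral_pi_prod (ν := ν)
    (f := fun k => if k = i then F else if k = j then G else fun _ => (1:ℝ))
  simp only [my_prod_eq_pair hij] at h
  rw [h, ← Finset.mul_prod_erase Finset.univ _ (Finset.mem_univ i),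
    ← Finset.mul_prod_erase _ _ (Finset.mem_erase.2 ⟨hij.symm, Finset.mem_univ j⟩),
    Finset.prod_eq_one, if_pos rfl, if_neg hij.symm, if_pos rfl, mul_one]
  intro k hk
  rw [Finset.mem_erase, Finset.mem_erase] at hk
  simp [hk.1, hk.2.1]

end Eval

section GaussMoments

theorem my_pdf01_eq :
    gaussianPDFReal 0 1 = fun x => (Real.sqrt (2 * Real.pi))⁻¹ * Real.exp (-(1/2) * x ^ 2) := by
  funext x
  simp only [gaussianPDFReal, NNReal.coe_one, mul_one, sub_zero]
  congr 1
  ring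

theorem my_integral_gauss01 (g : ℝ → ℝ) :
    ∫ t, g t ∂(gaussianReal 0 1) = ∫ x, gaussianPDFReal 0 1 x * g x := by
  rw [gaussianReal_of_var_ne_zero 0 one_ne_zero, gaussianPDF_def]
  rw [show (fun x => ENNReal.ofReal (gaussianPDFReal 0 1 x))
      = fun x => ((Real.toNNReal (gaussianPDFReal 0 1 x) : ℝ≥0) : ℝ≥0∞) from rfl]
  rw [integral_withDensity_eq_integral_smul (measurable_gaussianPDFReal 0 1).real_toNNReal g]
  congr 1
  funext x
  simp [NNReal.smul_def, Real.coe_toNNReal _ (gaussianPDFReal_nonneg 0 1 x)]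

theorem my_integrable_gauss01 {g : ℝ → ℝ}
    (h : Integrable (fun x => gaussianPDFReal 0 1 x * g x) volume) :
    Integrable g (gaussianReal 0 1) := by
  rw [gaussianReal_of_var_ne_zero 0 one_ne_zero, gaussianPDF_def]
  rw [show (fun x => ENNReal.ofReal (gaussianPDFReal 0 1 x))
      = fun x => ((Real.toNNReal (gaussianPDFReal 0 1 x) : ℝ≥0) : ℝ≥0∞) from rfl]
  rw [integrable_withDensity_iff_integrable_smul (measurable_gaussianPDFReal 0 1).real_toNNReal]
  refine h.congr (Filter.Eventually.of_forall fun x => ?_)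
  simp [NNReal.smul_def, Real.coe_toNNReal _ (gaussianPDFReal_nonneg 0 1 x)]

theorem my_int_exp : ∫ x : ℝ, Real.exp (-(1/2) * x ^ 2) = Real.sqrt (2 * Real.pi) := by
  rw [integral_gaussian, show Real.pi / (1/2 : ℝ) = 2 * Real.pi by ring]

theorem my_int_x_exp : ∫ x : ℝ, x * Real.exp (-(1/2) * x ^ 2) = 0 := by
  refine integral_eq_zero_of_hasDerivAt_of_integrable
    (f := fun x => -Real.exp (-(1/2) * x ^ 2)) (fun x => ?_)
    (integrable_mul_exp_neg_mul_sq (by norm_num : (0:ℝ) < 1/2))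
    (integrable_exp_neg_mul_sq (by norm_num : (0:ℝ) < 1/2)).neg
  have h := (((hasDerivAt_pow 2 x).const_mul (-(1/2) : ℝ)).exp).neg
  convert h using 1
  · rfl
  · simp
    ring

theorem my_integrable_x2_exp :
    Integrable (fun x : ℝ => x ^ 2 * Real.exp (-(1/2) * x ^ 2)) volume := by
  have := integrable_rpow_mul_exp_neg_mul_sq (by norm_num : (0:ℝ) < 1/2)
    (show (-1:ℝ) < 2 by norm_num)
  refine this.congr (Filter.Eventually.of_forall fun x => ?_)
  show x ^ (2:ℝ) * Real.exp (-(1/2) * x ^ 2) = x ^ (2:ℕ) * Real.exp (-(1/2) * x ^ 2)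
  rw [show ((2:ℝ)) = ((2:ℕ):ℝ) from by norm_num, Real.rpow_natCast]

theorem my_int_x2_exp : ∫ x : ℝ, x ^ 2 * Real.exp (-(1/2) * x ^ 2) = Real.sqrt (2 * Real.pi) := by
  have hb : (0:ℝ) < 1/2 := by norm_num
  have hint2 := my_integrable_x2_exp
  have hinte : Integrable (fun x : ℝ => Real.exp (-(1/2) * x ^ 2)) volume :=
    integrable_exp_neg_mul_sq hb
  have key : ∫ x : ℝ, (x ^ 2 * Real.exp (-(1/2) * x ^ 2) - Real.exp (-(1/2) * x ^ 2)) = 0 := by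
    refine integral_eq_zero_of_hasDerivAt_of_integrable
      (f := fun x => -x * Real.exp (-(1/2) * x ^ 2)) (fun x => ?_)
      (hint2.sub hinte)
      (((integrable_mul_exp_neg_mul_sq hb).neg).congr
        (Filter.Eventually.of_forall fun x => (neg_mul x _).symm))
    have h := (hasDerivAt_id x).neg.mul (((hasDerivAt_pow 2 x).const_mul (-(1/2) : ℝ)).exp)
    convert h using 1
    · rfl
    · rfl
    · simp
      ring
  rw [integral_sub hint2 hinte, my_int_exp, sub_eq_zero] at key
  exact key

theorem my_integrable_id : Integrable (fun t : ℝ => t) (gaussianReal 0 1) := by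
  refine my_integrable_gauss01 ?_
  rw [my_pdf01_eq]
  refine ((integrable_mul_exp_neg_mul_sq (by norm_num : (0:ℝ) < 1/2)).const_mul
    ((Real.sqrt (2 * Real.pi))⁻¹)).congr (Filter.Eventually.of_forall fun x => ?_)
  ring

theorem my_integrable_sq : Integrable (fun t : ℝ => t * t) (gaussianReal 0 1) := by
  refine my_integrable_gauss01 ?_
  rw [my_pdf01_eq]
  refine (my_integrable_x2_exp.const_mul ((Real.sqrt (2 * Real.pi))⁻¹)).congr
    (Filter.Eventually.of_forall fun x => ?_)
  ring

theorem my_moment1 : ∫ t, t ∂(gaussianReal 0 1) = 0 := by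
  rw [my_integral_gauss01, my_pdf01_eq]
  simp only
  rw [show (fun x : ℝ => (Real.sqrt (2 * Real.pi))⁻¹ * Real.exp (-(1/2) * x ^ 2) * x)
      = fun x : ℝ => (Real.sqrt (2 * Real.pi))⁻¹ * (x * Real.exp (-(1/2) * x ^ 2)) from
    funext fun x => by ring]
  rw [integral_const_mul, my_int_x_exp, mul_zero]

theorem my_moment2 : ∫ t, t * t ∂(gaussianReal 0 1) = 1 := by
  rw [my_integral_gauss01, my_pdf01_eq]
  simp only
  rw [show (fun x : ℝ => (Real.sqrt (2 * Real.pi))⁻¹ * Real.exp (-(1/2) * x ^ 2) * (x * x))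
      = fun x : ℝ => (Real.sqrt (2 * Real.pi))⁻¹ * (x ^ 2 * Real.exp (-(1/2) * x ^ 2)) from
    funext fun x => by ring]
  rw [integral_const_mul, my_int_x2_exp, inv_mul_cancel₀]
  positivity

end GaussMoments

end EtaAux

/-- The key equality `η_φ = Σ_φ g`: for a standard Gaussian vector `X`, a
centered noise `ε` independent of `X`, and the response
`y = ⟨φ(X), g⟩ + ε` with `φ(x) = Pᵀ x`, one has `E[φ(X) · y] = (Pᵀ P) g`. -/
theorem eta_eq_sigma_mulVec
    {Ω : Type*} [MeasurableSpace Ω] (μ : Measure Ω) [IsProbabilityMeasure μ]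
    (D R : ℕ) (X : Ω → (Fin D → ℝ))
    (hX : Measure.map X μ = Measure.pi (fun _ : Fin D => gaussianReal 0 1))
    (ε : Ω → ℝ) (hεInt : Integrable ε μ) (hε0 : ∫ ω, ε ω ∂μ = 0)
    (hIndep : IndepFun X ε μ)
    (P : Matrix (Fin D) (Fin R) ℝ) (g : Fin R → ℝ)
    (y : Ω → ℝ)
    (hy : ∀ ω, y ω = (∑ c, (Pᵀ.mulVec (X ω)) c * g c) + ε ω) :
    ∀ c : Fin R,
      ∫ ω, (Pᵀ.mulVec (X ω)) c * y ω ∂μ = ((Pᵀ * P).mulVec g) c := by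
  classical
  intro c
  set ν : Measure ℝ := gaussianReal 0 1 with hνdef
  set πm : Measure (Fin D → ℝ) := Measure.pi (fun _ : Fin D => ν) with hπdef
  have hXae : AEMeasurable X μ := by
    refine aemeasurable_of_map_neZero ?_
    rw [hX]
    infer_instance
  -- coordinate moments
  have hxij_int : ∀ i j : Fin D, Integrable (fun x : Fin D → ℝ => x i * x j) πm := by
    intro i j
    by_cases hij : i = j
    · subst hij
      exact my_integrable_comp_eval (F := fun t => t * t) my_integrable_sq i
    · exact my_integrable_eval_mul_eval hij my_integrable_id my_integrable_id
  have hxij_val : ∀ i j : Fin D,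
      ∫ x, x i * x j ∂πm = if i = j then 1 else 0 := by
    intro i j
    by_cases hij : i = j
    · subst hij
      rw [if_pos rfl]
      exact (my_integral_comp_eval (ν := ν) (fun t => t * t) i).trans my_moment2
    · rw [if_neg hij, my_integral_eval_mul_eval hij (fun t => t) (fun t => t), my_moment1,
        mul_zero]
  -- the quadratic part
  set G : (Fin D → ℝ) → ℝ := fun x => Pᵀ.mulVec x c * ∑ c', Pᵀ.mulVec x c' * g c' with hGdef
  have hφ : ∀ (x : Fin D → ℝ) (c' : Fin R), Pᵀ.mulVec x c' = ∑ i, P i c' * x i := by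
    intro x c'
    simp [Matrix.mulVec, dotProduct, Matrix.transpose_apply]
  have hφm : ∀ c' : Fin R, Measurable (fun x : Fin D → ℝ => Pᵀ.mulVec x c') := by
    intro c'
    simp only [hφ]
    exact Finset.measurable_sum _ fun i _ => (measurable_pi_apply i).const_mul _
  have hGexp : G = fun x => ∑ c', ∑ i, ∑ j, P i c * P j c' * g c' * (x i * x j) := by
    funext x
    simp only [hGdef, hφ]
    rw [Finset.mul_sum]
    refine Finset.sum_congr rfl fun c' _ => ?_
    rw [Finset.sum_mul]
    refine Finset.sum_congr rfl fun i _ => ?_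
    rw [Finset.sum_mul, Finset.mul_sum]
    exact Finset.sum_congr rfl fun j _ => by ring
  have hGmeas : Measurable G := by
    rw [hGexp]
    refine Finset.measurable_sum _ fun c' _ => Finset.measurable_sum _ fun i _ =>
      Finset.measurable_sum _ fun j _ => ?_
    exact (((measurable_pi_apply i).mul (measurable_pi_apply j)).const_mul _)
  have hGint : Integrable G πm := by
    rw [hGexp]
    refine integrable_finset_sum _ fun c' _ => integrable_finset_sum _ fun i _ =>
      integrable_finset_sum _ fun j _ => ?_
    exact (hxij_int i j).const_mul _
  have hGval : ∫ x, G x ∂πm = ((Pᵀ * P).mulVec g) c := by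
    rw [hGexp]
    rw [integral_finset_sum _ fun c' _ => integrable_finset_sum _ fun i _ =>
      integrable_finset_sum _ fun j _ => (hxij_int i j).const_mul _]
    have : ∀ c' : Fin R, (∫ x, ∑ i, ∑ j, P i c * P j c' * g c' * (x i * x j) ∂πm)
        = ∑ i, P i c * P i c' * g c' := by
      intro c'
      rw [integral_finset_sum _ fun i _ => integrable_finset_sum _ fun j _ =>
        (hxij_int i j).const_mul _]
      refine Finset.sum_congr rfl fun i _ => ?_
      rw [integral_finset_sum _ fun j _ => (hxij_int i j).const_mul _]
      have : ∀ j : Fin D, ∫ x, P i c * P j c' * g c' * (x i * x j) ∂πm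
          = if i = j then P i c * P j c' * g c' else 0 := by
        intro j
        rw [integral_const_mul, hxij_val i j, mul_ite, mul_one, mul_zero]
      simp_rw [this]
      simp
    simp_rw [this]
    simp only [Matrix.mulVec, Matrix.mul_apply, dotProduct, Matrix.transpose_apply,
      Finset.sum_mul]
  -- transport along X
  have hmap : ∫ ω, G (X ω) ∂μ = ∫ x, G x ∂πm := by
    rw [← hX, integral_map hXae hGmeas.aestronglyMeasurable]
  have hmapint : Integrable (fun ω => G (X ω)) μ := by
    have h : Integrable G (Measure.map X μ) := by rw [hX]; exact hGint
    exact (integrable_map_measure hGmeas.aestronglyMeasurable hXae).1 h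
  -- the noise part
  have hφXint : Integrable (fun ω => Pᵀ.mulVec (X ω) c) μ := by
    have hint : Integrable (fun x : Fin D → ℝ => Pᵀ.mulVec x c) πm := by
      simp only [hφ]
      refine integrable_finset_sum _ fun i _ => ?_
      exact (my_integrable_comp_eval (F := fun t => t) my_integrable_id i).const_mul _
    have h : Integrable (fun x : Fin D → ℝ => Pᵀ.mulVec x c) (Measure.map X μ) := by
      rw [hX]; exact hint
    exact (integrable_map_measure (hφm c).aestronglyMeasurable hXae).1 h
  have hindc : IndepFun (fun ω => Pᵀ.mulVec (X ω) c) ε μ :=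
    hIndep.comp (hφm c) measurable_id
  have hnoise_int : Integrable (fun ω => Pᵀ.mulVec (X ω) c * ε ω) μ :=
    hindc.integrable_mul hφXint hεInt
  have hnoise : ∫ ω, Pᵀ.mulVec (X ω) c * ε ω ∂μ = 0 := by
    rw [hindc.integral_fun_mul_eq_mul_integral hφXint.1 hεInt.1, hε0, mul_zero]
  -- assemble
  have heq : (fun ω => Pᵀ.mulVec (X ω) c * y ω)
      = fun ω => G (X ω) + Pᵀ.mulVec (X ω) c * ε ω := by
    funext ω
    rw [hy ω]
    simp only [hGdef]
    ring
  rw [heq, integral_add hmapint hnoise_int, hnoise, add_zero, hmap, hGval]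
end

section
/- Let (Ω, μ) be a probability space and X : Ω → (Fin D → ℝ) a random vector whose law is the D-fold product of the standard Gaussian measure on ℝ. Let ε : Ω → ℝ be integrable with ∫ ε dμ = 0, independent of X. Let P be a D × R real matrix, g : Fin R → ℝ, and let Δ : Fin D → ℝ satisfy Pᵀ.mulVec Δ = 0 (i.e., ∑ i, P i c * Δ i = 0 for every c). Define y(ω) = ∑ c, (Pᵀ.mulVec (X ω)) c * g c + ∑ i, Δ i * X ω i + ε ω. Then for every c : Fin R, ∫ (Pᵀ.mulVec (X ω)) c * y(ω) dμ(ω) = ((Pᵀ * P).mulVec g) c; the orthogonal approximation residual Δ does not change E[φ(X)·y] = (PᵀP) g. -/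
open MeasureTheory ProbabilityTheory Matrix
open scoped BigOperators

section AuxGaussianMoments
open Filter
open scoped NNReal ENNReal

noncomputable section


lemma myint1 : Integrable (fun x : ℝ => x * Real.exp (-(2⁻¹ : ℝ) * x ^ 2)) := by
  simpa using integrable_mul_exp_neg_mul_sq (by norm_num : (0:ℝ) < 2⁻¹)

lemma myodd : ∫ x : ℝ, x * Real.exp (-(2⁻¹ : ℝ) * x ^ 2) = 0 := by
  have h := MeasureTheory.integral_neg_eq_self (fun x : ℝ => x * Real.exp (-(2⁻¹ : ℝ) * x ^ 2)) volume
  simp only [neg_sq, neg_mul, integral_neg] at h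
  simp only [neg_mul]
  linarith

lemma myint2 : Integrable (fun x : ℝ => x ^ 2 * Real.exp (-(2⁻¹ : ℝ) * x ^ 2)) := by
  have hg : Integrable (fun x : ℝ => 4 * Real.exp (-(4⁻¹ : ℝ) * x ^ 2)) :=
    (integrable_exp_neg_mul_sq (by norm_num : (0:ℝ) < 4⁻¹)).const_mul 4
  refine hg.mono' ?_ (ae_of_all _ fun x => ?_)
  · exact ((measurable_id.pow_const 2).mul
      ((measurable_id.pow_const 2).const_mul (-(2⁻¹:ℝ))).exp).aestronglyMeasurable
  · have h1 : x ^ 2 ≤ 4 * Real.exp ((4⁻¹:ℝ) * x ^ 2) := by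
      nlinarith [Real.add_one_le_exp ((4⁻¹:ℝ) * x ^ 2), sq_nonneg x, Real.exp_nonneg ((4⁻¹:ℝ) * x ^ 2)]
    have h3 : (0:ℝ) < Real.exp (-(4⁻¹:ℝ) * x ^ 2) := Real.exp_pos _
    have hsplit : Real.exp (-(2⁻¹:ℝ) * x ^ 2) = Real.exp (-(4⁻¹:ℝ) * x ^ 2) * Real.exp (-(4⁻¹:ℝ) * x ^ 2) := by
      rw [← Real.exp_add]; congr 1; ring
    have hprod : Real.exp ((4⁻¹:ℝ) * x ^ 2) * Real.exp (-(4⁻¹:ℝ) * x ^ 2) = 1 := by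
      rw [← Real.exp_add]; simp
    rw [norm_mul, Real.norm_eq_abs, Real.norm_eq_abs, abs_of_pos (Real.exp_pos _), abs_pow, sq_abs, hsplit]
    nlinarith [mul_le_mul_of_nonneg_right h1 (le_of_lt (mul_pos h3 h3)), hprod, h3.le]

lemma mytendsto (l : Filter ℝ) (hl : Tendsto (fun t:ℝ => t^2) l atTop) :
    Tendsto (fun t : ℝ => -(t * Real.exp (-(2⁻¹ : ℝ) * t ^ 2))) l (nhds 0) := by
  have h1 : Tendsto (fun t:ℝ => -(4⁻¹:ℝ) * t^2) l atBot := by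
    have h2 : Tendsto (fun t:ℝ => (4⁻¹:ℝ) * t^2) l atTop := hl.const_mul_atTop (by norm_num)
    have := tendsto_neg_atTop_atBot.comp h2
    simpa [Function.comp_def] using this
  have hg : Tendsto (fun t:ℝ => Real.exp (-(4⁻¹:ℝ) * t^2)) l (nhds 0) :=
    Real.tendsto_exp_atBot.comp h1
  refine squeeze_zero_norm (fun t => ?_) hg
  have habs : |t| ≤ Real.exp ((4⁻¹:ℝ) * t ^ 2) := by
    nlinarith [Real.add_one_le_exp ((4⁻¹:ℝ) * t ^ 2), sq_nonneg (|t| - 2), sq_abs t]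
  have hkey : Real.exp ((4⁻¹:ℝ) * t^2) * Real.exp (-(2⁻¹:ℝ) * t^2) = Real.exp (-(4⁻¹:ℝ) * t^2) := by
    rw [← Real.exp_add]; congr 1; ring
  rw [norm_neg, norm_mul, Real.norm_eq_abs, Real.norm_eq_abs, abs_of_pos (Real.exp_pos _)]
  calc |t| * Real.exp (-(2⁻¹:ℝ) * t ^ 2)
      ≤ Real.exp ((4⁻¹:ℝ) * t^2) * Real.exp (-(2⁻¹:ℝ) * t ^ 2) :=
        mul_le_mul_of_nonneg_right habs (Real.exp_pos _).le
    _ = Real.exp (-(4⁻¹:ℝ) * t^2) := hkey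

lemma mysec : ∫ x : ℝ, x ^ 2 * Real.exp (-(2⁻¹ : ℝ) * x ^ 2) = Real.sqrt (2 * Real.pi) := by
  have hd : ∀ x : ℝ, HasDerivAt (fun t : ℝ => -(t * Real.exp (-(2⁻¹ : ℝ) * t ^ 2)))
      ((x ^ 2 - 1) * Real.exp (-(2⁻¹ : ℝ) * x ^ 2)) x := by
    intro x
    have h1 : HasDerivAt (fun t : ℝ => -(2⁻¹ : ℝ) * t ^ 2) (-(2⁻¹:ℝ) * (2 * x)) x :=
      ((hasDerivAt_pow 2 x).const_mul _).congr_deriv (by ring)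
    have h2 : HasDerivAt (fun t : ℝ => Real.exp (-(2⁻¹ : ℝ) * t ^ 2))
        (Real.exp (-(2⁻¹:ℝ) * x ^ 2) * (-(2⁻¹:ℝ) * (2 * x))) x := h1.exp
    have h3 := ((hasDerivAt_id x).mul h2).neg
    refine h3.congr_deriv ?_
    simp only [id_eq]
    ring
  have hI : Integrable (fun x : ℝ => (x ^ 2 - 1) * Real.exp (-(2⁻¹ : ℝ) * x ^ 2)) := by
    have := myint2.sub (integrable_exp_neg_mul_sq (by norm_num : (0:ℝ) < 2⁻¹))
    simpa [sub_mul, Pi.sub_def] using this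
  have hsq_bot : Tendsto (fun t:ℝ => t^2) atBot atTop := by
    have := (tendsto_pow_atTop (n := 2) two_ne_zero).comp (tendsto_neg_atBot_atTop (G := ℝ))
    simpa [Function.comp_def] using this
  have key := MeasureTheory.integral_of_hasDerivAt_of_tendsto hd hI
    (mytendsto _ hsq_bot) (mytendsto _ (tendsto_pow_atTop (n := 2) two_ne_zero))
  rw [sub_zero] at key
  have hsub := MeasureTheory.integral_sub myint2 (integrable_exp_neg_mul_sq (by norm_num : (0:ℝ) < 2⁻¹))
  have hgauss : ∫ x : ℝ, Real.exp (-(2⁻¹ : ℝ) * x ^ 2) = Real.sqrt (2 * Real.pi) := by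
    rw [integral_gaussian]
    rw [mul_comm]
    norm_num
  have h4 : ∫ x : ℝ, (x ^ 2 - 1) * Real.exp (-(2⁻¹ : ℝ) * x ^ 2)
      = (∫ x : ℝ, x ^ 2 * Real.exp (-(2⁻¹ : ℝ) * x ^ 2)) - ∫ x : ℝ, Real.exp (-(2⁻¹ : ℝ) * x ^ 2) := by
    rw [← hsub]; congr 1; ext x; ring
  rw [key] at h4
  linarith [h4, hgauss]
end

noncomputable section


lemma mypdf01 (x : ℝ) : gaussianPDFReal 0 1 x = (Real.sqrt (2 * Real.pi))⁻¹ * Real.exp (-(2⁻¹:ℝ) * x ^ 2) := by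
  simp only [gaussianPDFReal, NNReal.coe_one, mul_one, sub_zero]
  ring_nf

lemma mydensity : gaussianReal 0 1
    = volume.withDensity (fun x => ((Real.toNNReal (gaussianPDFReal 0 1 x) : ℝ≥0) : ℝ≥0∞)) := by
  rw [gaussianReal_of_var_ne_zero 0 one_ne_zero]
  rfl

lemma mymeas : Measurable (fun x => Real.toNNReal (gaussianPDFReal 0 1 x)) :=
  (measurable_gaussianPDFReal 0 1).real_toNNReal

lemma gauss_integral (f : ℝ → ℝ) :
    ∫ x, f x ∂(gaussianReal 0 1) = ∫ x, gaussianPDFReal 0 1 x * f x := by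
  rw [mydensity, integral_withDensity_eq_integral_smul mymeas]
  congr 1
  ext x
  rw [NNReal.smul_def, Real.coe_toNNReal _ (gaussianPDFReal_nonneg 0 1 x), smul_eq_mul]

lemma gauss_integrable (f : ℝ → ℝ) (hf : Integrable (fun x => gaussianPDFReal 0 1 x * f x) volume) :
    Integrable f (gaussianReal 0 1) := by
  rw [mydensity, integrable_withDensity_iff_integrable_smul mymeas]
  refine hf.congr (ae_of_all _ fun x => ?_)
  simp only [NNReal.smul_def, smul_eq_mul, Real.coe_toNNReal _ (gaussianPDFReal_nonneg 0 1 x)]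
end
noncomputable section


lemma sqrt2pi_pos : 0 < Real.sqrt (2 * Real.pi) := Real.sqrt_pos.mpr (by positivity)

lemma myint1' : Integrable (fun x : ℝ => x * Real.exp (-(2⁻¹ : ℝ) * x ^ 2)) := by
  simpa using integrable_mul_exp_neg_mul_sq (by norm_num : (0:ℝ) < 2⁻¹)

lemma gint1 : Integrable (fun x : ℝ => x) (gaussianReal 0 1) := by
  refine gauss_integrable _ ?_
  refine (myint1'.const_mul (Real.sqrt (2 * Real.pi))⁻¹).congr (ae_of_all _ fun x => ?_)
  simp only [mypdf01]; ring

lemma gmean : ∫ x, x ∂(gaussianReal 0 1) = 0 := by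
  rw [gauss_integral]
  have : ∀ x : ℝ, gaussianPDFReal 0 1 x * x
      = (Real.sqrt (2 * Real.pi))⁻¹ * (x * Real.exp (-(2⁻¹:ℝ) * x ^ 2)) := by
    intro x; rw [mypdf01]; ring
  simp only [this]
  rw [MeasureTheory.integral_const_mul]
  have hodd : ∫ x : ℝ, x * Real.exp (-(2⁻¹ : ℝ) * x ^ 2) = 0 := by
    have h := MeasureTheory.integral_neg_eq_self (fun x : ℝ => x * Real.exp (-(2⁻¹ : ℝ) * x ^ 2)) volume
    simp only [neg_sq, neg_mul, integral_neg] at h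
    simp only [neg_mul]
    linarith
  rw [hodd, mul_zero]
noncomputable section


lemma gint2 : Integrable (fun x : ℝ => x ^ 2) (gaussianReal 0 1) := by
  refine gauss_integrable _ ?_
  refine (myint2.const_mul (Real.sqrt (2 * Real.pi))⁻¹).congr (ae_of_all _ fun x => ?_)
  simp only [mypdf01]; ring

lemma gsec : ∫ x, x ^ 2 ∂(gaussianReal 0 1) = 1 := by
  rw [gauss_integral]
  have : ∀ x : ℝ, gaussianPDFReal 0 1 x * x ^ 2
      = (Real.sqrt (2 * Real.pi))⁻¹ * (x ^ 2 * Real.exp (-(2⁻¹:ℝ) * x ^ 2)) := by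
    intro x; rw [mypdf01]; ring
  simp only [this]
  rw [MeasureTheory.integral_const_mul, mysec, inv_mul_cancel₀ sqrt2pi_pos.ne']

end

lemma pi_integrable_prod {D : ℕ} (f : Fin D → ℝ → ℝ) (hf : ∀ i, Integrable (f i) (gaussianReal 0 1)) :
    Integrable (fun x : Fin D → ℝ => ∏ i, f i (x i)) (Measure.pi fun _ => gaussianReal 0 1) := by
  letI : MeasureSpace ℝ := ⟨gaussianReal 0 1⟩
  haveI : SigmaFinite (volume : Measure ℝ) := inferInstanceAs (SigmaFinite (gaussianReal 0 1))
  exact MeasureTheory.Integrable.fintype_prod (f := f) hf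

lemma pi_integral_prod {D : ℕ} (f : Fin D → ℝ → ℝ) :
    ∫ x : Fin D → ℝ, ∏ i, f i (x i) ∂(Measure.pi fun _ => gaussianReal 0 1)
      = ∏ i, ∫ t, f i t ∂(gaussianReal 0 1) := by
  letI : MeasureSpace ℝ := ⟨gaussianReal 0 1⟩
  haveI : SigmaFinite (volume : Measure ℝ) := inferInstanceAs (SigmaFinite (gaussianReal 0 1))
  exact MeasureTheory.integral_fintype_prod_eq_prod f

lemma pi_moment {D : ℕ} (i j : Fin D) :
    Integrable (fun x : Fin D → ℝ => x i * x j) (Measure.pi fun _ => gaussianReal 0 1) ∧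
    ∫ x, x i * x j ∂(Measure.pi fun _ => gaussianReal 0 1) = if i = j then 1 else 0 := by
  set f : Fin D → ℝ → ℝ := fun k t => (if k = i then t else 1) * (if k = j then t else 1) with hf
  have hprod : ∀ x : Fin D → ℝ, (∏ k, f k (x k)) = x i * x j := by
    intro x
    rw [hf]
    rw [Finset.prod_mul_distrib]
    simp
  have hfint : ∀ k, Integrable (f k) (gaussianReal 0 1) := by
    intro k
    by_cases hki : k = i
    · by_cases hkj : k = j
      · have hfe : f k = fun t => t * t := by funext t; simp only [hf]; rw [if_pos hki, if_pos hkj]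
        rw [hfe]; simpa [pow_two] using gint2
      · have hfe : f k = fun t => t := by
          funext t; simp only [hf]; rw [if_pos hki, if_neg hkj, mul_one]
        rw [hfe]; exact gint1
    · by_cases hkj : k = j
      · have hfe : f k = fun t => t := by
          funext t; simp only [hf]; rw [if_neg hki, if_pos hkj, one_mul]
        rw [hfe]; exact gint1
      · have hfe : f k = fun t => (1:ℝ) := by
          funext t; simp only [hf]; rw [if_neg hki, if_neg hkj, mul_one]
        rw [hfe]; exact integrable_const 1
  constructor
  · exact (pi_integrable_prod f hfint).congr (ae_of_all _ hprod)
  · rw [show (fun x : Fin D → ℝ => x i * x j) = fun x => ∏ k, f k (x k) from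
      funext fun x => (hprod x).symm, pi_integral_prod]
    by_cases hij : i = j
    · subst hij
      rw [if_pos rfl]
      apply Finset.prod_eq_one
      intro k _
      by_cases hk : k = i
      · simp only [hf, hk, if_pos rfl]
        simpa [pow_two] using gsec
      · simp [hf, hk]
    · rw [if_neg hij]
      apply Finset.prod_eq_zero (Finset.mem_univ i)
      simp only [hf, if_pos rfl, if_neg hij, mul_one]
      exact gmean

lemma pi_int_single {D : ℕ} (i : Fin D) :
    Integrable (fun x : Fin D → ℝ => x i) (Measure.pi fun _ => gaussianReal 0 1) := by
  have hfint : ∀ k, Integrable (fun t : ℝ => if k = i then t else 1) (gaussianReal 0 1) := by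
    intro k
    by_cases hk : k = i
    · simpa [hk] using gint1
    · simpa [hk] using integrable_const (1:ℝ)
  have := pi_integrable_prod _ hfint
  refine this.congr (ae_of_all _ fun x => ?_)
  simp

end

end AuxGaussianMoments

/-- The key equality `η_{φ_{R_t}} = Σ_{φ_{R_t}} g` in the under-specified rank
setting: an approximation residual `Δ` orthogonal to the columns of `P` does
not change `E[φ(X) · y] = (Pᵀ P) g`. -/

theorem eta_eq_sigma_mulVec_underspecified
    {Ω : Type*} [MeasurableSpace Ω] (μ : Measure Ω) [IsProbabilityMeasure μ]
    (D R : ℕ) (X : Ω → (Fin D → ℝ))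
    (hX : Measure.map X μ = Measure.pi (fun _ : Fin D => gaussianReal 0 1))
    (ε : Ω → ℝ) (hεInt : Integrable ε μ) (hε0 : ∫ ω, ε ω ∂μ = 0)
    (hIndep : IndepFun X ε μ)
    (P : Matrix (Fin D) (Fin R) ℝ) (g : Fin R → ℝ)
    (Δ : Fin D → ℝ) (hΔ : Pᵀ.mulVec Δ = 0)
    (y : Ω → ℝ)
    (hy : ∀ ω, y ω = (∑ c, (Pᵀ.mulVec (X ω)) c * g c) + (∑ i, Δ i * X ω i) + ε ω) :
    ∀ c : Fin R,
      ∫ ω, (Pᵀ.mulVec (X ω)) c * y ω ∂μ = ((Pᵀ * P).mulVec g) c := by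
  intro c
  -- X is a.e.-measurable
  have hXm : AEMeasurable X μ := by
    by_contra h
    rw [Measure.map_of_not_aemeasurable h] at hX
    have h1 : (Measure.pi fun _ : Fin D => gaussianReal 0 1) Set.univ = 1 := measure_univ
    rw [← hX] at h1
    simp at h1
  have hXi : ∀ i, AEMeasurable (fun ω => X ω i) μ :=
    fun i => (measurable_pi_apply i).comp_aemeasurable hXm
  have hAES : ∀ i j : Fin D, AEStronglyMeasurable (fun x : Fin D → ℝ => x i * x j) (Measure.map X μ) :=
    fun i j => ((measurable_pi_apply i).mul (measurable_pi_apply j)).aestronglyMeasurable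
  have hIntXX : ∀ i j : Fin D, Integrable (fun ω => X ω i * X ω j) μ := by
    intro i j
    have h2 : Integrable (fun x : Fin D → ℝ => x i * x j) (Measure.map X μ) := by
      rw [hX]; exact (pi_moment i j).1
    exact (integrable_map_measure (hAES i j) hXm).mp h2
  have hEXX : ∀ i j : Fin D, ∫ ω, X ω i * X ω j ∂μ = if i = j then 1 else 0 := by
    intro i j
    have h3 := integral_map hXm (hAES i j)
    rw [hX] at h3
    rw [← h3] at *
    exact (pi_moment i j).2
  have hIntX : ∀ i : Fin D, Integrable (fun ω => X ω i) μ := by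
    intro i
    have h2 : Integrable (fun x : Fin D → ℝ => x i) (Measure.map X μ) := by
      rw [hX]; exact pi_int_single i
    exact (integrable_map_measure (measurable_pi_apply i).aestronglyMeasurable hXm).mp h2
  set w : Fin D → ℝ := fun jj => (∑ c', P jj c' * g c') + Δ jj with hw
  have hrep : ∀ ω, (Pᵀ.mulVec (X ω)) c * y ω
      = (∑ i, ∑ j, (P i c * w j) * (X ω i * X ω j)) + (∑ i, P i c * X ω i) * ε ω := by
    intro ω
    rw [hy ω]
    have hA : (∑ c', (Pᵀ.mulVec (X ω)) c' * g c') + (∑ j, Δ j * X ω j) = ∑ j, w j * X ω j := by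
      simp only [Matrix.mulVec, dotProduct, Matrix.transpose_apply, hw]
      have h1 : ∑ c', (∑ i, P i c' * X ω i) * g c' = ∑ i, (∑ c', P i c' * g c') * X ω i := by
        simp only [Finset.sum_mul]
        rw [Finset.sum_comm]
        refine Finset.sum_congr rfl fun i _ => Finset.sum_congr rfl fun c' _ => by ring
      rw [h1, ← Finset.sum_add_distrib]
      exact Finset.sum_congr rfl fun i _ => by ring
    rw [hA, mul_add]
    have hmv : (Pᵀ.mulVec (X ω)) c = ∑ i, P i c * X ω i := by
      simp [Matrix.mulVec, dotProduct, Matrix.transpose_apply]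
    congr 1
    · rw [hmv, Finset.sum_mul]
      refine Finset.sum_congr rfl fun i _ => ?_
      rw [Finset.mul_sum]
      exact Finset.sum_congr rfl fun j _ => by ring
  have hIntSum : Integrable (fun ω => ∑ i, ∑ j, (P i c * w j) * (X ω i * X ω j)) μ :=
    integrable_finset_sum _ fun i _ => integrable_finset_sum _ fun j _ => (hIntXX i j).const_mul _
  have hφint : Integrable (fun ω => ∑ i, P i c * X ω i) μ :=
    integrable_finset_sum _ fun i _ => (hIntX i).const_mul _
  have hφindep : IndepFun (fun ω => ∑ i, P i c * X ω i) ε μ := by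
    have hmeas : Measurable (fun v : Fin D → ℝ => ∑ i, P i c * v i) :=
      Finset.measurable_sum _ fun i _ => (measurable_pi_apply i).const_mul _
    exact hIndep.comp hmeas measurable_id
  have hεprod : Integrable (fun ω => (∑ i, P i c * X ω i) * ε ω) μ :=
    hφindep.integrable_mul hφint hεInt
  have hεterm : ∫ ω, (∑ i, P i c * X ω i) * ε ω ∂μ = 0 := by
    have h := hφindep.integral_mul_eq_mul_integral hφint.1 hεInt.1
    rw [hε0, mul_zero] at h
    exact h
  calc ∫ ω, (Pᵀ.mulVec (X ω)) c * y ω ∂μ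
      = ∫ ω, ((∑ i, ∑ j, (P i c * w j) * (X ω i * X ω j)) + (∑ i, P i c * X ω i) * ε ω) ∂μ :=
        integral_congr_ae (ae_of_all _ hrep)
    _ = ∑ i, ∑ j, (P i c * w j) * ∫ ω, X ω i * X ω j ∂μ := by
        rw [integral_add hIntSum hεprod, hεterm, add_zero,
          integral_finset_sum _ (fun i _ => integrable_finset_sum _ fun j _ => (hIntXX i j).const_mul _)]
        refine Finset.sum_congr rfl fun i _ => ?_
        rw [integral_finset_sum _ (fun j _ => (hIntXX i j).const_mul _)]
        exact Finset.sum_congr rfl fun j _ => integral_const_mul _ _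
    _ = ∑ i, P i c * w i := by
        simp only [hEXX, mul_ite, mul_one, mul_zero]
        refine Finset.sum_congr rfl fun i _ => ?_
        rw [Finset.sum_ite_eq]
        simp
    _ = ((Pᵀ * P).mulVec g) c := by
        have hΔc : ∑ i, P i c * Δ i = 0 := by
          have h := congrFun hΔ c
          simpa [Matrix.mulVec, dotProduct, Matrix.transpose_apply] using h
        simp only [hw, mul_add, Finset.sum_add_distrib, hΔc, add_zero]
        simp only [Matrix.mulVec, dotProduct, Matrix.mul_apply, Matrix.transpose_apply,
          Finset.sum_mul, Finset.mul_sum]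
        rw [Finset.sum_comm]
        exact Finset.sum_congr rfl fun i _ => Finset.sum_congr rfl fun c' _ => by ring
end

section
/- Let (Ω, μ) be a probability space and X : Ω → (Fin D → ℝ) a random vector whose law is the D-fold product of the standard Gaussian measure on ℝ. Let P be a D × R real matrix, Σ = Pᵀ * P, and a : Fin R → ℝ. Write φ(ω) = Pᵀ.mulVec (X ω) and Z(ω) = (∑ c, a c * φ(ω) c) • φ(ω) (the vector φφᵀa). Then the covariance matrix of Z satisfies, for all r, s : Fin R, ∫ Z(ω) r * Z(ω) s dμ(ω) − (∫ Z(ω) r dμ(ω)) * (∫ Z(ω) s dμ(ω)) = (Σ.mulVec a) r * (Σ.mulVec a) s + (∑ c, a c * (Σ.mulVec a) c) * Σ r s; that is, Var(φφᵀa) = Σaaᵀ Σ + (aᵀΣa) Σ. -/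
open MeasureTheory ProbabilityTheory Matrix
open scoped BigOperators NNReal ENNReal

noncomputable section VarAux

open Real

private lemma vpa_intg_pow (n : ℕ) :
    Integrable (fun x : ℝ => x ^ n * Real.exp (-(1/2 : ℝ) * x ^ 2)) := by
  have h := integrable_rpow_mul_exp_neg_mul_sq (b := (1/2 : ℝ)) (by norm_num)
    (s := (n : ℝ)) (by exact_mod_cast lt_of_lt_of_le (by norm_num : (-1:ℝ) < 0) (Nat.cast_nonneg n))
  simpa [Real.rpow_natCast] using h

private lemma vpa_int_step (n : ℕ) :
    ∫ x : ℝ, x ^ (n+2) * Real.exp (-(1/2 : ℝ) * x ^ 2)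
      = (n+1 : ℝ) * ∫ x : ℝ, x ^ n * Real.exp (-(1/2 : ℝ) * x ^ 2) := by
  have hderiv : ∀ x : ℝ, HasDerivAt (fun x : ℝ => x ^ (n+1) * Real.exp (-(1/2 : ℝ) * x ^ 2))
      ((n+1 : ℝ) * x ^ n * Real.exp (-(1/2 : ℝ) * x ^ 2)
        - x ^ (n+2) * Real.exp (-(1/2 : ℝ) * x ^ 2)) x := by
    intro x
    have h1 : HasDerivAt (fun x : ℝ => x ^ (n+1)) ((n+1 : ℝ) * x ^ n) x := by
      simpa using hasDerivAt_pow (n+1) x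
    have h2 : HasDerivAt (fun x : ℝ => Real.exp (-(1/2 : ℝ) * x ^ 2))
        (Real.exp (-(1/2 : ℝ) * x ^ 2) * (-(1/2 : ℝ) * (2 * x))) x := by
      have hx : HasDerivAt (fun x : ℝ => -(1/2 : ℝ) * x ^ 2) (-(1/2 : ℝ) * (2 * x)) x := by
        simpa using ((hasDerivAt_pow 2 x).const_mul (-(1/2 : ℝ)))
      exact hx.exp
    have h3 := h1.mul h2
    refine h3.congr_deriv ?_
    rw [pow_succ, pow_succ]
    ring
  have hfun : (fun x : ℝ => (n+1 : ℝ) * x ^ n * Real.exp (-(1/2 : ℝ) * x ^ 2)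
      - x ^ (n+2) * Real.exp (-(1/2 : ℝ) * x ^ 2))
      = (fun x : ℝ => (n+1 : ℝ) * (x ^ n * Real.exp (-(1/2 : ℝ) * x ^ 2))
      - x ^ (n+2) * Real.exp (-(1/2 : ℝ) * x ^ 2)) := by
    funext x; ring
  have hint : Integrable (fun x : ℝ => (n+1 : ℝ) * x ^ n * Real.exp (-(1/2 : ℝ) * x ^ 2)
      - x ^ (n+2) * Real.exp (-(1/2 : ℝ) * x ^ 2)) := by
    rw [hfun]; exact ((vpa_intg_pow n).const_mul _).sub (vpa_intg_pow (n+2))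
  have hf : Integrable (fun x : ℝ => x ^ (n+1) * Real.exp (-(1/2 : ℝ) * x ^ 2)) := vpa_intg_pow (n+1)
  have h0 := integral_eq_zero_of_hasDerivAt_of_integrable hderiv hint hf
  rw [hfun] at h0
  rw [integral_sub (((vpa_intg_pow n).const_mul _)) (vpa_intg_pow (n+2)),
    MeasureTheory.integral_const_mul] at h0
  linarith

private lemma vpa_int_exp_base :
    ∫ x : ℝ, Real.exp (-(1/2 : ℝ) * x ^ 2) = Real.sqrt (2 * π) := by
  rw [integral_gaussian]
  rw [show π / (1/2 : ℝ) = 2 * π by ring]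

private lemma vpa_int_pow_one : ∫ x : ℝ, x ^ 1 * Real.exp (-(1/2 : ℝ) * x ^ 2) = 0 := by
  have hderiv : ∀ x : ℝ, HasDerivAt (fun x : ℝ => -Real.exp (-(1/2 : ℝ) * x ^ 2))
      (x ^ 1 * Real.exp (-(1/2 : ℝ) * x ^ 2)) x := by
    intro x
    have hx : HasDerivAt (fun x : ℝ => -(1/2 : ℝ) * x ^ 2) (-(1/2 : ℝ) * (2 * x)) x := by
      simpa using ((hasDerivAt_pow 2 x).const_mul (-(1/2 : ℝ)))
    have h := (hx.exp).neg
    refine h.congr_deriv ?_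
    ring
  have hf : Integrable (fun x : ℝ => -Real.exp (-(1/2 : ℝ) * x ^ 2)) :=
    (integrable_exp_neg_mul_sq (by norm_num)).neg
  exact integral_eq_zero_of_hasDerivAt_of_integrable hderiv (vpa_intg_pow 1) hf

private lemma vpa_gauss_pdf_std (x : ℝ) :
    gaussianPDFReal 0 1 x = (Real.sqrt (2 * π))⁻¹ * Real.exp (-(1/2 : ℝ) * x ^ 2) := by
  unfold gaussianPDFReal
  norm_num
  left
  ring_nf

private lemma vpa_integral_gaussianReal_eq (g : ℝ → ℝ) :
    ∫ x, g x ∂(gaussianReal 0 1)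
      = ∫ x, gaussianPDFReal 0 1 x * g x := by
  rw [gaussianReal_of_var_ne_zero 0 one_ne_zero]
  have h : gaussianPDF 0 1 = fun x => ((Real.toNNReal (gaussianPDFReal 0 1 x) : ℝ≥0) : ℝ≥0∞) := by
    funext x; rfl
  rw [h, integral_withDensity_eq_integral_smul
    ((measurable_gaussianPDFReal 0 1).real_toNNReal) g]
  congr 1
  funext x
  simp only [NNReal.smul_def, smul_eq_mul]
  rw [Real.coe_toNNReal _ (gaussianPDFReal_nonneg 0 1 x)]

private lemma vpa_integrable_pow_gaussianReal (n : ℕ) :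
    Integrable (fun x : ℝ => x ^ n) (gaussianReal 0 1) := by
  rw [gaussianReal_of_var_ne_zero 0 one_ne_zero]
  have hm : Measurable fun x : ℝ => Real.toNNReal (gaussianPDFReal 0 1 x) :=
    (measurable_gaussianPDFReal 0 1).real_toNNReal
  have h : gaussianPDF 0 1 = fun x => ((Real.toNNReal (gaussianPDFReal 0 1 x) : ℝ≥0) : ℝ≥0∞) := by
    funext x; rfl
  rw [h, integrable_withDensity_iff_integrable_smul hm]
  have h2 : (fun x : ℝ => Real.toNNReal (gaussianPDFReal 0 1 x) • (x ^ n))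
      = fun x : ℝ => (Real.sqrt (2 * π))⁻¹ * (x ^ n * Real.exp (-(1/2:ℝ) * x ^ 2)) := by
    funext x
    simp only [NNReal.smul_def, smul_eq_mul]
    rw [Real.coe_toNNReal _ (gaussianPDFReal_nonneg 0 1 x), vpa_gauss_pdf_std]
    ring
  rw [h2]
  exact (vpa_intg_pow n).const_mul _

private def vpaMn (n : ℕ) : ℝ := ∫ x, x ^ n ∂(gaussianReal 0 1)

private lemma vpa_gauss_moment (n : ℕ) :
    vpaMn n = (Real.sqrt (2 * π))⁻¹ * ∫ x : ℝ, x ^ n * Real.exp (-(1/2:ℝ) * x ^ 2) := by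
  rw [vpaMn, vpa_integral_gaussianReal_eq]
  have h : (fun x : ℝ => gaussianPDFReal 0 1 x * x ^ n)
      = fun x : ℝ => (Real.sqrt (2 * π))⁻¹ * (x ^ n * Real.exp (-(1/2:ℝ) * x ^ 2)) := by
    funext x
    rw [vpa_gauss_pdf_std]
    ring
  rw [h, MeasureTheory.integral_const_mul]

private lemma vpa_sqrt_ne : Real.sqrt (2 * π) ≠ 0 :=
  (Real.sqrt_pos.mpr (by positivity)).ne'

private lemma vpa_int_pow_zero :
    ∫ x : ℝ, x ^ 0 * Real.exp (-(1/2 : ℝ) * x ^ 2) = Real.sqrt (2 * π) := by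
  simp only [pow_zero, one_mul]
  exact vpa_int_exp_base

private lemma vpaM0 : vpaMn 0 = 1 := by
  rw [vpaMn]; simp

private lemma vpaM1 : vpaMn 1 = 0 := by
  rw [vpa_gauss_moment, vpa_int_pow_one, mul_zero]

private lemma vpaM2 : vpaMn 2 = 1 := by
  rw [vpa_gauss_moment, show (2 : ℕ) = 0 + 2 from rfl, vpa_int_step 0, vpa_int_pow_zero]
  norm_num
  field_simp

private lemma vpaM3 : vpaMn 3 = 0 := by
  rw [vpa_gauss_moment, show (3 : ℕ) = 1 + 2 from rfl, vpa_int_step 1, vpa_int_pow_one]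
  ring

private lemma vpaM4 : vpaMn 4 = 3 := by
  rw [vpa_gauss_moment, show (4 : ℕ) = 2 + 2 from rfl, vpa_int_step 2,
    show (∫ x : ℝ, x ^ 2 * Real.exp (-(1/2 : ℝ) * x ^ 2))
      = (((0:ℕ):ℝ) + 1) * ∫ x : ℝ, x ^ 0 * Real.exp (-(1/2 : ℝ) * x ^ 2) from vpa_int_step 0,
    vpa_int_pow_zero]
  field_simp
  ring

/- product measure machinery -/

private theorem vpa_integrable_prod {n : ℕ} {ν : Measure ℝ} [IsProbabilityMeasure ν]
    {f : Fin n → ℝ → ℝ} (hf : ∀ i, Integrable (f i) ν) :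
    Integrable (fun (x : Fin n → ℝ) ↦ ∏ i, f i (x i)) (Measure.pi fun _ => ν) := by
  induction n with
  | zero => simp only [Finset.univ_eq_empty, Finset.prod_empty]
            exact integrable_const _
  | succ n n_ih =>
      have := ((measurePreserving_piFinSuccAbove (fun _ : Fin (n+1) => ν) 0).symm)
      rw [← this.integrable_comp_emb (MeasurableEquiv.measurableEmbedding _)]
      simp_rw [MeasurableEquiv.piFinSuccAbove_symm_apply, Fin.insertNthEquiv,
        Fin.prod_univ_succ, Fin.insertNth_zero]
      simp only [Fin.zero_succAbove, Function.comp_def, Fin.cons_zero, Fin.cons_succ]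
      have : Integrable (fun (x : Fin n → ℝ) ↦ ∏ j, f (Fin.succ j) (x j)) (Measure.pi fun _ => ν) :=
        n_ih (fun i ↦ hf _)
      exact Integrable.mul_prod (hf 0) this

private theorem vpa_integral_prod {n : ℕ} {ν : Measure ℝ} [IsProbabilityMeasure ν]
    (f : Fin n → ℝ → ℝ) :
    ∫ x : Fin n → ℝ, ∏ i, f i (x i) ∂(Measure.pi fun _ => ν) = ∏ i, ∫ x, f i x ∂ν := by
  induction n with
  | zero =>
      simp only [Finset.univ_eq_empty, Finset.prod_empty, integral_const]
      simp
  | succ n n_ih =>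
      calc
        _ = ∫ x : ℝ × (Fin n → ℝ),
            f 0 x.1 * ∏ i : Fin n, f (Fin.succ i) (x.2 i)
              ∂(ν.prod (Measure.pi fun _ => ν)) := by
          rw [← ((measurePreserving_piFinSuccAbove
            (fun _ : Fin (n+1) => ν) 0).symm).integral_comp']
          simp only [MeasurableEquiv.piFinSuccAbove_symm_apply, Fin.insertNthEquiv,
            Fin.prod_univ_succ, Fin.insertNth_zero, Equiv.coe_fn_mk, Fin.cons_succ,
            Fin.zero_succAbove, Fin.cons_zero, Fin.cast_eq_self, cast_eq]
        _ = (∫ x, f 0 x ∂ν) * ∏ i : Fin n, ∫ x, f (Fin.succ i) x ∂ν := by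
          rw [← n_ih, ← integral_prod_mul]
        _ = ∏ i, ∫ x, f i x ∂ν := by rw [Fin.prod_univ_succ]

end VarAux

noncomputable section VarAux2

open Real

variable {D : ℕ}

private lemma vpa_prod_ite_coord (i : Fin D) (x : Fin D → ℝ) :
    ∏ m, (if m = i then x m else 1) = x i := by
  simp [Finset.prod_ite_eq']

private lemma vpa_integmono (n : ℕ) (g : ℝ → ℝ) (hg : ∀ t, g t = t ^ n) :
    Integrable g (gaussianReal 0 1) := by
  rw [show g = fun t => t ^ n from funext hg]
  exact vpa_integrable_pow_gaussianReal n

private lemma vpa_factor_int (m i j k l : Fin D) :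
    Integrable (fun t : ℝ => (if m = i then t else 1) * (if m = j then t else 1)
      * ((if m = k then t else 1) * (if m = l then t else 1))) (gaussianReal 0 1) := by
  split_ifs <;>
  first
    | (apply vpa_integmono 4; intro t; ring1)
    | (apply vpa_integmono 3; intro t; ring1)
    | (apply vpa_integmono 2; intro t; ring1)
    | (apply vpa_integmono 1; intro t; ring1)
    | (apply vpa_integmono 0; intro t; ring1)

private lemma vpa_factor_val (m i j k l : Fin D) :
    ∫ t, (if m = i then t else 1) * (if m = j then t else 1)
      * ((if m = k then t else 1) * (if m = l then t else 1)) ∂(gaussianReal 0 1)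
    = vpaMn ((if m = i then 1 else 0) + (if m = j then 1 else 0)
        + ((if m = k then 1 else 0) + (if m = l then 1 else 0))) := by
  split_ifs <;>
  · norm_num [vpaMn]
    all_goals (congr 1; funext t; ring)

private lemma vpa_factor_int2 (m i j : Fin D) :
    Integrable (fun t : ℝ => (if m = i then t else 1) * (if m = j then t else 1))
      (gaussianReal 0 1) := by
  split_ifs <;>
  first
    | (apply vpa_integmono 2; intro t; ring1)
    | (apply vpa_integmono 1; intro t; ring1)
    | (apply vpa_integmono 0; intro t; ring1)

private lemma vpa_factor_val2 (m i j : Fin D) :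
    ∫ t, (if m = i then t else 1) * (if m = j then t else 1) ∂(gaussianReal 0 1)
    = vpaMn ((if m = i then 1 else 0) + (if m = j then 1 else 0)) := by
  split_ifs <;>
  · norm_num [vpaMn]
    all_goals (congr 1; funext t; ring)

private lemma vpa_moment2 (i j : Fin D) :
    ∫ x : Fin D → ℝ, x i * x j ∂(Measure.pi fun _ => gaussianReal 0 1)
      = if i = j then (1:ℝ) else 0 := by
  have hexp : (fun x : Fin D → ℝ => x i * x j)
      = fun x => ∏ m, ((if m = i then x m else 1) * (if m = j then x m else 1)) := by
    funext x
    simp only [Finset.prod_mul_distrib, vpa_prod_ite_coord]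
  rw [hexp, vpa_integral_prod
    (fun m => fun t => (if m = i then t else 1) * (if m = j then t else 1))]
  have hv : ∀ m : Fin D, ∫ t, (if m = i then t else 1) * (if m = j then t else 1)
      ∂(gaussianReal 0 1)
      = vpaMn ((if m = i then 1 else 0) + (if m = j then 1 else 0)) :=
    fun m => vpa_factor_val2 m i j
  rw [Finset.prod_congr rfl (fun m _ => hv m)]
  by_cases hij : i = j
  · subst hij
    simp only [if_pos rfl]
    rw [Finset.prod_congr rfl (fun m _ =>
      show vpaMn ((if m = i then 1 else 0) + (if m = i then 1 else 0)) = 1 by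
        by_cases h : m = i <;> norm_num [h, vpaM2, vpaM0])]
    simp
  · rw [if_neg hij]
    refine Finset.prod_eq_zero (Finset.mem_univ i) ?_
    rw [if_pos rfl, if_neg hij]
    norm_num [vpaM1]

private lemma vpa_moment4 (i j k l : Fin D) :
    ∫ x : Fin D → ℝ, x i * x j * (x k * x l) ∂(Measure.pi fun _ => gaussianReal 0 1)
      = (if i = j then (1:ℝ) else 0) * (if k = l then (1:ℝ) else 0)
        + (if i = k then (1:ℝ) else 0) * (if j = l then (1:ℝ) else 0)
        + (if i = l then (1:ℝ) else 0) * (if j = k then (1:ℝ) else 0) := by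
  have hexp : (fun x : Fin D → ℝ => x i * x j * (x k * x l))
      = fun x => ∏ m, ((if m = i then x m else 1) * (if m = j then x m else 1)
          * ((if m = k then x m else 1) * (if m = l then x m else 1))) := by
    funext x
    simp only [Finset.prod_mul_distrib, vpa_prod_ite_coord]
  rw [hexp, vpa_integral_prod (fun m => fun t => (if m = i then t else 1) * (if m = j then t else 1)
    * ((if m = k then t else 1) * (if m = l then t else 1)))]
  rw [Finset.prod_congr rfl (fun m _ => vpa_factor_val m i j k l)]
  by_cases hij : i = j
  · subst hij
    by_cases hkl : k = l
    · subst hkl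
      by_cases hik : i = k
      · subst hik
        rw [Finset.prod_congr rfl (fun m _ =>
          show vpaMn _ = (if m = i then (3:ℝ) else 1) by
            by_cases h : m = i <;> norm_num [h, vpaM4, vpaM0])]
        norm_num [Finset.prod_ite_eq']
      · rw [Finset.prod_congr rfl (fun m _ =>
          show vpaMn _ = (1:ℝ) by
            by_cases h1 : m = i <;> by_cases h2 : m = k <;>
              first
              | (exact absurd (h1.symm.trans h2) hik)
              | norm_num [h1, h2, hik, Ne.symm hik, vpaM2, vpaM0])]
        norm_num [hik]
    · simp only [if_pos rfl, if_neg hkl]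
      by_cases hik : i = k
      · subst hik
        have hil : i ≠ l := hkl
        refine Eq.trans (Finset.prod_eq_zero (Finset.mem_univ i) ?_) (by simp [hil, hkl])
        norm_num [hil, vpaM3]
      · by_cases hil : i = l
        · subst hil
          refine Eq.trans (Finset.prod_eq_zero (Finset.mem_univ i) ?_)
            (by simp [hik, hkl, Ne.symm hik])
          norm_num [hik, fun h : i = k => hik h, vpaM3]
        · refine Eq.trans (Finset.prod_eq_zero (Finset.mem_univ k) ?_) (by simp [hik, hil])
          norm_num [Ne.symm hik, fun h : k = i => hik h.symm, hkl, vpaM1,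
            show k ≠ l from hkl]
  · by_cases hkl : k = l
    · subst hkl
      simp only [if_neg hij, if_pos rfl]
      by_cases hik : i = k
      · subst hik
        refine Eq.trans (Finset.prod_eq_zero (Finset.mem_univ i) ?_)
          (by simp [hij, Ne.symm hij])
        norm_num [hij, vpaM3]
      · by_cases hjk : j = k
        · subst hjk
          refine Eq.trans (Finset.prod_eq_zero (Finset.mem_univ j) ?_)
            (by simp [hij, Ne.symm hij, hik])
          norm_num [Ne.symm hij, hik, fun h : j = i => hij h.symm, vpaM3]
        · refine Eq.trans (Finset.prod_eq_zero (Finset.mem_univ i) ?_) (by simp [hij, hik])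
          norm_num [hij, hik, vpaM1]
    · simp only [if_neg hij, if_neg hkl]
      by_cases hik : i = k
      · subst hik
        by_cases hjl : j = l
        · subst hjl
          rw [Finset.prod_congr rfl (fun m _ =>
            show vpaMn _ = (1:ℝ) by
              by_cases h1 : m = i <;> by_cases h2 : m = j <;>
                first
                | (exact absurd (h1.symm.trans h2) hij)
                | norm_num [h1, h2, hij, Ne.symm hij, vpaM2, vpaM0])]
          norm_num [hij, Ne.symm hij]
        · refine Eq.trans (Finset.prod_eq_zero (Finset.mem_univ j) ?_)
            (by simp [hjl, hij, Ne.symm hij])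
          norm_num [Ne.symm hij, hjl, fun h : j = i => hij h.symm, vpaM1]
      · by_cases hil : i = l
        · subst hil
          by_cases hjk : j = k
          · subst hjk
            rw [Finset.prod_congr rfl (fun m _ =>
              show vpaMn _ = (1:ℝ) by
                by_cases h1 : m = i <;> by_cases h2 : m = j <;>
                  first
                  | (exact absurd (h1.symm.trans h2) hij)
                  | norm_num [h1, h2, hij, Ne.symm hij, vpaM2, vpaM0])]
            norm_num [hij, Ne.symm hij, hik]
          · refine Eq.trans (Finset.prod_eq_zero (Finset.mem_univ j) ?_)
              (by simp [hij, hjk, Ne.symm hij])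
            norm_num [Ne.symm hij, hjk, fun h : j = i => hij h.symm, vpaM1]
        · refine Eq.trans (Finset.prod_eq_zero (Finset.mem_univ i) ?_) (by simp [hik, hil])
          norm_num [hij, hik, hil, vpaM1]

private lemma vpa_int_mono2 (i j : Fin D) :
    Integrable (fun x : Fin D → ℝ => x i * x j) (Measure.pi fun _ => gaussianReal 0 1) := by
  have hexp : (fun x : Fin D → ℝ => x i * x j)
      = fun x => ∏ m, ((if m = i then x m else 1) * (if m = j then x m else 1)) := by
    funext x
    simp only [Finset.prod_mul_distrib, vpa_prod_ite_coord]
  rw [hexp]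
  exact vpa_integrable_prod (fun m => vpa_factor_int2 m i j)

private lemma vpa_int_mono4 (i j k l : Fin D) :
    Integrable (fun x : Fin D → ℝ => x i * x j * (x k * x l))
      (Measure.pi fun _ => gaussianReal 0 1) := by
  have hexp : (fun x : Fin D → ℝ => x i * x j * (x k * x l))
      = fun x => ∏ m, ((if m = i then x m else 1) * (if m = j then x m else 1)
          * ((if m = k then x m else 1) * (if m = l then x m else 1))) := by
    funext x
    simp only [Finset.prod_mul_distrib, vpa_prod_ite_coord]
  rw [hexp]
  exact vpa_integrable_prod (fun m => vpa_factor_int m i j k l)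

end VarAux2

noncomputable section VarAux3

variable {D : ℕ}

private lemma vpa_sum2 (A B : Fin D → ℝ) :
    ∫ x : Fin D → ℝ, (∑ p, A p * x p) * (∑ q, B q * x q)
        ∂(Measure.pi fun _ => gaussianReal 0 1)
      = ∑ p, A p * B p := by
  have hexp : (fun x : Fin D → ℝ => (∑ p, A p * x p) * (∑ q, B q * x q))
      = fun x => ∑ p, ∑ q, (A p * B q) * (x p * x q) := by
    funext x
    rw [Finset.sum_mul_sum]
    exact Finset.sum_congr rfl fun p _ => Finset.sum_congr rfl fun q _ => by ring
  rw [hexp, integral_finset_sum _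
    (fun p _ => integrable_finset_sum _ (fun q _ => (vpa_int_mono2 p q).const_mul _))]
  refine Finset.sum_congr rfl fun p _ => ?_
  rw [integral_finset_sum _ (fun q _ => (vpa_int_mono2 p q).const_mul _)]
  simp_rw [MeasureTheory.integral_const_mul, vpa_moment2]
  simp [Finset.sum_ite_eq]

private lemma vpa_sum4 (A B C E : Fin D → ℝ) :
    ∫ x : Fin D → ℝ, (∑ p, A p * x p) * (∑ q, B q * x q)
        * ((∑ u, C u * x u) * (∑ w, E w * x w))
        ∂(Measure.pi fun _ => gaussianReal 0 1)
      = (∑ p, A p * B p) * (∑ u, C u * E u)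
        + (∑ p, A p * C p) * (∑ q, B q * E q)
        + (∑ p, A p * E p) * (∑ q, B q * C q) := by
  have hexp : (fun x : Fin D → ℝ => (∑ p, A p * x p) * (∑ q, B q * x q)
      * ((∑ u, C u * x u) * (∑ w, E w * x w)))
      = fun x => ∑ p, ∑ q, ∑ u, ∑ w,
          (A p * B q * (C u * E w)) * (x p * x q * (x u * x w)) := by
    funext x
    rw [Finset.sum_mul_sum, Finset.sum_mul_sum, Finset.sum_mul_sum]
    refine Finset.sum_congr rfl fun p _ => ?_
    simp_rw [Finset.sum_mul_sum]
    rw [Finset.sum_comm]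
    exact Finset.sum_congr rfl fun q _ => Finset.sum_congr rfl fun u _ =>
      Finset.sum_congr rfl fun w _ => by ring
  rw [hexp, integral_finset_sum _ (fun p _ => integrable_finset_sum _ (fun q _ =>
    integrable_finset_sum _ (fun u _ => integrable_finset_sum _ (fun w _ =>
      (vpa_int_mono4 p q u w).const_mul _))))]
  have step : ∀ p : Fin D,
      ∫ x : Fin D → ℝ, ∑ q, ∑ u, ∑ w, (A p * B q * (C u * E w)) * (x p * x q * (x u * x w))
        ∂(Measure.pi fun _ => gaussianReal 0 1)
      = ∑ q, ∑ u, ∑ w, (A p * B q * (C u * E w)) *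
          ((if p = q then (1:ℝ) else 0) * (if u = w then (1:ℝ) else 0)
            + (if p = u then (1:ℝ) else 0) * (if q = w then (1:ℝ) else 0)
            + (if p = w then (1:ℝ) else 0) * (if q = u then (1:ℝ) else 0)) := by
    intro p
    rw [integral_finset_sum _ (fun q _ => integrable_finset_sum _ (fun u _ =>
      integrable_finset_sum _ (fun w _ => (vpa_int_mono4 p q u w).const_mul _)))]
    refine Finset.sum_congr rfl fun q _ => ?_
    rw [integral_finset_sum _ (fun u _ =>
      integrable_finset_sum _ (fun w _ => (vpa_int_mono4 p q u w).const_mul _))]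
    refine Finset.sum_congr rfl fun u _ => ?_
    rw [integral_finset_sum _ (fun w _ => (vpa_int_mono4 p q u w).const_mul _)]
    refine Finset.sum_congr rfl fun w _ => ?_
    rw [MeasureTheory.integral_const_mul, vpa_moment4]
  rw [Finset.sum_congr rfl fun p _ => step p]
  have h1 : ∑ p, ∑ q, ∑ u, ∑ w, (A p * B q * (C u * E w)) *
        ((if p = q then (1:ℝ) else 0) * (if u = w then (1:ℝ) else 0))
      = (∑ p, A p * B p) * (∑ u, C u * E u) := by
    simp only [mul_ite, ite_mul, mul_zero, zero_mul, mul_one, one_mul,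
      Finset.sum_ite_eq, Finset.sum_ite_eq', Finset.mem_univ, if_true,
      Finset.sum_ite_irrel, Finset.sum_const_zero]
    all_goals rw [Finset.sum_mul_sum]
    all_goals exact Finset.sum_congr rfl fun p _ => Finset.sum_congr rfl fun u _ => by ring
  have h2 : ∑ p, ∑ q, ∑ u, ∑ w, (A p * B q * (C u * E w)) *
        ((if p = u then (1:ℝ) else 0) * (if q = w then (1:ℝ) else 0))
      = (∑ p, A p * C p) * (∑ q, B q * E q) := by
    simp only [mul_ite, ite_mul, mul_zero, zero_mul, mul_one, one_mul,
      Finset.sum_ite_eq, Finset.sum_ite_eq', Finset.mem_univ, if_true,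
      Finset.sum_ite_irrel, Finset.sum_const_zero]
    all_goals rw [Finset.sum_mul_sum]
    all_goals exact Finset.sum_congr rfl fun p _ => Finset.sum_congr rfl fun q _ => by ring
  have h3 : ∑ p, ∑ q, ∑ u, ∑ w, (A p * B q * (C u * E w)) *
        ((if p = w then (1:ℝ) else 0) * (if q = u then (1:ℝ) else 0))
      = (∑ p, A p * E p) * (∑ q, B q * C q) := by
    simp only [mul_ite, ite_mul, mul_zero, zero_mul, mul_one, one_mul,
      Finset.sum_ite_eq, Finset.sum_ite_eq', Finset.mem_univ, if_true,
      Finset.sum_ite_irrel, Finset.sum_const_zero]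
    all_goals rw [Finset.sum_mul_sum]
    all_goals exact Finset.sum_congr rfl fun p _ => Finset.sum_congr rfl fun q _ => by ring
  calc ∑ p, ∑ q, ∑ u, ∑ w, (A p * B q * (C u * E w)) *
        ((if p = q then (1:ℝ) else 0) * (if u = w then (1:ℝ) else 0)
          + (if p = u then (1:ℝ) else 0) * (if q = w then (1:ℝ) else 0)
          + (if p = w then (1:ℝ) else 0) * (if q = u then (1:ℝ) else 0))
      = ∑ p, ∑ q, ∑ u, ∑ w, ((A p * B q * (C u * E w)) *
          ((if p = q then (1:ℝ) else 0) * (if u = w then (1:ℝ) else 0))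
        + ((A p * B q * (C u * E w)) *
          ((if p = u then (1:ℝ) else 0) * (if q = w then (1:ℝ) else 0))
        + (A p * B q * (C u * E w)) *
          ((if p = w then (1:ℝ) else 0) * (if q = u then (1:ℝ) else 0)))) := by
        exact Finset.sum_congr rfl fun p _ => Finset.sum_congr rfl fun q _ =>
          Finset.sum_congr rfl fun u _ => Finset.sum_congr rfl fun w _ => by ring
    _ = _ := by
        simp only [Finset.sum_add_distrib]
        rw [h1, h2, h3]
        ring

end VarAux3

/-- The variance identity of the 'term (c)' computation in Theorem 3.1:
`Var(φ φᵀ a) = Σ a aᵀ Σ + (aᵀ Σ a) Σ` where `φ(x) = Pᵀ x` and `Σ = Pᵀ P`. -/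
theorem variance_phi_phiT_a
    {Ω : Type*} [MeasurableSpace Ω] (μ : Measure Ω) [IsProbabilityMeasure μ]
    (D R : ℕ) (X : Ω → (Fin D → ℝ))
    (hX : Measure.map X μ = Measure.pi (fun _ : Fin D => gaussianReal 0 1))
    (P : Matrix (Fin D) (Fin R) ℝ) (S : Matrix (Fin R) (Fin R) ℝ)
    (hS : S = Pᵀ * P) (a : Fin R → ℝ)
    (φ : Ω → Fin R → ℝ) (hφ : ∀ ω, φ ω = Pᵀ.mulVec (X ω))
    (Z : Ω → Fin R → ℝ) (hZ : ∀ ω, Z ω = (∑ c, a c * φ ω c) • φ ω) :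
    ∀ r s : Fin R,
      (∫ ω, Z ω r * Z ω s ∂μ) - (∫ ω, Z ω r ∂μ) * (∫ ω, Z ω s ∂μ)
        = (S.mulVec a) r * (S.mulVec a) s
          + (∑ c, a c * (S.mulVec a) c) * S r s := by
  intro r s
  -- X is a.e.-measurable
  have hXae : AEMeasurable X μ := by
    by_contra h
    have h0 : Measure.map X μ = 0 := Measure.map_of_not_aemeasurable h
    rw [hX] at h0
    have h1 : (Measure.pi (fun _ : Fin D => gaussianReal 0 1)) Set.univ = 1 :=
      measure_univ
    rw [h0] at h1
    simp at h1
  set A : Fin D → ℝ := fun p => ∑ c, a c * P p c with hA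
  have mlin : ∀ B : Fin D → ℝ, Measurable fun x : Fin D → ℝ => ∑ p, B p * x p :=
    fun B => Finset.measurable_sum _ fun p _ => (measurable_pi_apply p).const_mul _
  have hmap : ∀ (g : (Fin D → ℝ) → ℝ), Measurable g →
      ∫ ω, g (X ω) ∂μ = ∫ x, g x ∂(Measure.pi fun _ : Fin D => gaussianReal 0 1) := by
    intro g hg
    rw [← hX]
    exact (integral_map hXae hg.aestronglyMeasurable).symm
  -- the key pointwise rewriting
  have key : ∀ (r : Fin R) (x : Fin D → ℝ),
      (∑ c, a c * (Pᵀ.mulVec x) c) * (Pᵀ.mulVec x) r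
        = (∑ p, A p * x p) * (∑ q, P q r * x q) := by
    intro r x
    have h2 : (Pᵀ.mulVec x) r = ∑ q, P q r * x q := by
      simp [Matrix.mulVec, dotProduct, transpose_apply]
    have h1 : (∑ c, a c * (Pᵀ.mulVec x) c) = ∑ p, A p * x p := by
      simp only [Matrix.mulVec, dotProduct, transpose_apply, Finset.mul_sum]
      rw [Finset.sum_comm]
      refine Finset.sum_congr rfl fun p _ => ?_
      simp only [hA, Finset.sum_mul]
      exact Finset.sum_congr rfl fun c _ => by ring
    rw [h1, h2]
  have hZr : ∀ r : Fin R, (fun ω => Z ω r)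
      = fun ω => ((fun x : Fin D → ℝ => (∑ p, A p * x p) * (∑ q, P q r * x q)) (X ω)) := by
    intro r
    funext ω
    rw [hZ, hφ]
    simp only [Pi.smul_apply, smul_eq_mul]
    exact key r (X ω)
  have hEr : ∀ r : Fin R, ∫ ω, Z ω r ∂μ = ∑ p, A p * P p r := by
    intro r
    rw [hZr r, hmap (fun x : Fin D → ℝ => (∑ p, A p * x p) * (∑ q, P q r * x q)) ((mlin A).mul (mlin fun q => P q r)), vpa_sum2]
  have hErs : ∫ ω, Z ω r * Z ω s ∂μ
      = (∑ p, A p * P p r) * (∑ u, A u * P u s)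
        + (∑ p, A p * A p) * (∑ q, P q r * P q s)
        + (∑ p, A p * P p s) * (∑ q, P q r * A q) := by
    have hfun : (fun ω => Z ω r * Z ω s)
        = fun ω => ((fun x : Fin D → ℝ => (∑ p, A p * x p) * (∑ q, P q r * x q)
            * ((∑ u, A u * x u) * (∑ w, P w s * x w))) (X ω)) := by
      funext ω
      have h1 := congrFun (hZr r) ω
      have h2 := congrFun (hZr s) ω
      simp only at h1 h2
      rw [h1, h2]
    rw [hfun, hmap (fun x : Fin D → ℝ => (∑ p, A p * x p) * (∑ q, P q r * x q)
        * ((∑ u, A u * x u) * (∑ w, P w s * x w))) ((((mlin A).mul (mlin fun q => P q r))).mul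
      ((mlin A).mul (mlin fun w => P w s))), vpa_sum4]
  have hSa : ∀ r : Fin R, (S.mulVec a) r = ∑ p, A p * P p r := by
    intro r
    rw [hS]
    simp only [Matrix.mulVec, dotProduct, Matrix.mul_apply, transpose_apply, hA,
      Finset.sum_mul, Finset.mul_sum]
    rw [Finset.sum_comm]
    exact Finset.sum_congr rfl fun p _ => Finset.sum_congr rfl fun c _ => by ring
  have hSrs : S r s = ∑ q, P q r * P q s := by
    rw [hS]
    simp [Matrix.mul_apply, transpose_apply]
  have haSa : (∑ c, a c * (S.mulVec a) c) = ∑ p, A p * A p := by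
    have h1 : (∑ c, a c * (S.mulVec a) c) = ∑ c, ∑ p, a c * (A p * P p c) := by
      refine Finset.sum_congr rfl fun c _ => ?_
      rw [hSa c, Finset.mul_sum]
    rw [h1, Finset.sum_comm]
    refine Finset.sum_congr rfl fun p _ => ?_
    simp only [hA, Finset.mul_sum]
    exact Finset.sum_congr rfl fun c _ => by ring
  have hcomm : (∑ q, P q r * A q) = ∑ q, A q * P q r :=
    Finset.sum_congr rfl fun q _ => mul_comm _ _
  rw [hErs, hEr r, hEr s, hSa r, hSa s, haSa, hSrs, hcomm]
  ring
end

section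
/- Let (Ω, μ) be a probability space and X : Ω → (Fin D → ℝ) a random vector whose law is the D-fold product of the standard Gaussian measure on ℝ. Let P be a D × R real matrix and Δ : Fin D → ℝ with Pᵀ.mulVec Δ = 0. Write φ(ω) = Pᵀ.mulVec (X ω). Then for all r, s : Fin R, ∫ (∑ i, Δ i * X ω i)² * φ(ω) r * φ(ω) s dμ(ω) = (∑ i, (Δ i)²) * (Pᵀ * P) r s; that is, E[⟨Δ, X⟩² φφᵀ] = ‖Δ‖² Σ when Δ is orthogonal to the columns of P. -/
open MeasureTheory ProbabilityTheory Matrix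
open scoped BigOperators

section RSMIAux
open Real Filter
open scoped ENNReal NNReal Real

namespace RSMI

noncomputable def J (n : ℕ) : ℝ := ∫ x : ℝ, x ^ n * Real.exp (-(x ^ 2) / 2)

lemma integrable_J (n : ℕ) :
    Integrable (fun x : ℝ => x ^ n * Real.exp (-(x ^ 2) / 2)) := by
  have h := integrable_rpow_mul_exp_neg_mul_sq (b := 1/2) (by norm_num) (s := n)
    (lt_of_lt_of_le neg_one_lt_zero (Nat.cast_nonneg n))
  have heq : (fun x : ℝ => x ^ (n : ℝ) * Real.exp (-(1/2 : ℝ) * x ^ 2))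
      = fun x : ℝ => x ^ n * Real.exp (-(x ^ 2) / 2) := by
    funext x
    rw [Real.rpow_natCast]
    congr 1
    ring_nf
  rwa [heq] at h

lemma J_zero : J 0 = Real.sqrt (2 * π) := by
  have h := integral_gaussian (1/2)
  have heq : (fun x : ℝ => Real.exp (-(1/2 : ℝ) * x ^ 2))
      = fun x : ℝ => (x : ℝ) ^ (0:ℕ) * Real.exp (-(x ^ 2) / 2) := by
    funext x; rw [pow_zero, one_mul]; congr 1; ring
  rw [heq] at h
  rw [J, h]
  rw [show π / (1/2 : ℝ) = 2 * π by ring]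

lemma J_odd (n : ℕ) (hn : n % 2 = 1) : J n = 0 := by
  have h := integral_neg_eq_self (fun x : ℝ => x ^ n * Real.exp (-(x ^ 2) / 2)) volume
  have : (fun x : ℝ => (-x) ^ n * Real.exp (-((-x) ^ 2) / 2))
      = fun x : ℝ => -(x ^ n * Real.exp (-(x ^ 2) / 2)) := by
    funext x
    rw [Odd.neg_pow ⟨n/2, by omega⟩, neg_sq]
    ring
  rw [show (fun x : ℝ => (fun y : ℝ => y ^ n * Real.exp (-(y ^ 2) / 2)) (-x))
      = fun x : ℝ => (-x) ^ n * Real.exp (-((-x) ^ 2) / 2) from rfl, this] at h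
  rw [integral_neg] at h
  have : J n = - J n := by rw [J] at *; linarith [h]
  linarith [this]

end RSMI

namespace RSMI

lemma tendsto_poly_gauss (n : ℕ) :
    Tendsto (fun x : ℝ => x ^ n * Real.exp (-(x ^ 2) / 2)) atTop (nhds 0) := by
  have h := rpow_mul_exp_neg_mul_sq_isLittleO_exp_neg (b := 1/2) (by norm_num) (n : ℝ)
  have heq : (fun x : ℝ => x ^ (n : ℝ) * Real.exp (-(1/2 : ℝ) * x ^ 2))
      = fun x : ℝ => x ^ n * Real.exp (-(x ^ 2) / 2) := by
    funext x; rw [Real.rpow_natCast]; congr 1; ring_nf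
  rw [heq] at h
  refine h.trans_tendsto ?_
  have h1 : Tendsto (fun x : ℝ => (1/2 : ℝ) * x) atTop atTop :=
    Tendsto.const_mul_atTop (by norm_num) tendsto_id
  have h2 := Real.tendsto_exp_neg_atTop_nhds_zero.comp h1
  have heq2 : ((fun x : ℝ => Real.exp (-x)) ∘ fun x : ℝ => (1/2 : ℝ) * x)
      = fun x : ℝ => Real.exp (-(1/2 : ℝ) * x) := by
    funext x; simp [Function.comp, neg_mul]
  rwa [heq2] at h2

lemma tendsto_poly_gauss_bot (n : ℕ) :
    Tendsto (fun x : ℝ => x ^ n * Real.exp (-(x ^ 2) / 2)) atBot (nhds 0) := by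
  have h := (tendsto_poly_gauss n).comp tendsto_neg_atBot_atTop
  have : (fun x : ℝ => ((-x) ^ n * Real.exp (-((-x) ^ 2) / 2)))
      = fun x : ℝ => (-1 : ℝ) ^ n * (x ^ n * Real.exp (-(x ^ 2) / 2)) := by
    funext x; rw [neg_pow, neg_sq]; ring
  have h2 : Tendsto (fun x : ℝ => (-1 : ℝ) ^ n * (x ^ n * Real.exp (-(x ^ 2) / 2)))
      atBot (nhds 0) := by
    rw [← this]; exact h
  have h3 := h2.const_mul ((-1 : ℝ) ^ n)
  simp only [← mul_assoc, ← mul_pow, neg_mul_neg, one_mul, one_pow, mul_zero] at h3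
  simpa using h3

lemma J_step (k : ℕ) : J (k + 2) = (k + 1) * J k := by
  -- d/dx (-(x^(k+1) * exp(-x²/2))) = x^(k+2) * exp(-x²/2) - (k+1) x^k exp(-x²/2)
  have hderiv : ∀ x : ℝ, HasDerivAt (fun x : ℝ => -(x ^ (k+1) * Real.exp (-(x ^ 2) / 2)))
      (x ^ (k+2) * Real.exp (-(x ^ 2) / 2) - (k+1) * (x ^ k * Real.exp (-(x ^ 2) / 2))) x := by
    intro x
    have h1 : HasDerivAt (fun x : ℝ => x ^ (k+1)) ((k+1) * x ^ k) x := by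
      simpa using hasDerivAt_pow (k+1) x
    have h2 : HasDerivAt (fun x : ℝ => Real.exp (-(x ^ 2) / 2)) (-x * Real.exp (-(x ^ 2) / 2)) x := by
      have hx : HasDerivAt (fun x : ℝ => -(x ^ 2) / 2) (-x) x := by
        have := (hasDerivAt_pow 2 x).neg.div_const 2
        simpa using this.congr_deriv (by ring)
      simpa [mul_comm] using hx.exp
    have : HasDerivAt (fun x : ℝ => -(x ^ (k+1) * Real.exp (-(x ^ 2) / 2)))
        (-((k+1) * x ^ k * Real.exp (-(x ^ 2) / 2) + x ^ (k+1) * (-x * Real.exp (-(x ^ 2) / 2)))) x :=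
      (h1.mul h2).neg
    convert this using 1
    ring
  have hint2 : Integrable (fun x : ℝ => x ^ (k+2) * Real.exp (-(x ^ 2) / 2)
      - (k+1) * (x ^ k * Real.exp (-(x ^ 2) / 2))) :=
    (integrable_J (k+2)).sub ((integrable_J k).const_mul _)
  have htop : Tendsto (fun x : ℝ => -(x ^ (k+1) * Real.exp (-(x ^ 2) / 2))) atTop (nhds 0) := by
    simpa using (tendsto_poly_gauss (k+1)).neg
  have hbot : Tendsto (fun x : ℝ => -(x ^ (k+1) * Real.exp (-(x ^ 2) / 2))) atBot (nhds 0) := by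
    simpa using (tendsto_poly_gauss_bot (k+1)).neg
  have h := MeasureTheory.integral_of_hasDerivAt_of_tendsto hderiv hint2 hbot htop
  rw [sub_zero] at h
  rw [integral_sub (integrable_J (k+2)) ((integrable_J k).const_mul _)] at h
  rw [integral_const_mul] at h
  have : J (k+2) - (k+1) * J k = 0 := by rw [J, J]; exact h
  linarith

lemma J_two : J 2 = Real.sqrt (2 * π) := by
  have h := J_step 0
  rw [J_zero] at h
  norm_num [Real.sqrt_mul_self, Real.sqrt_mul (by norm_num : (0:ℝ) ≤ 2)] at h ⊢
  exact h

lemma J_four : J 4 = 3 * Real.sqrt (2 * π) := by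
  have h := J_step 2
  rw [J_two] at h
  norm_num [Real.sqrt_mul (by norm_num : (0:ℝ) ≤ 2)] at h ⊢
  linarith

end RSMI

namespace RSMI

lemma pdf01_eq (x : ℝ) :
    gaussianPDFReal 0 1 x = (Real.sqrt (2 * π))⁻¹ * Real.exp (-(x ^ 2) / 2) := by
  simp [gaussianPDFReal]

lemma integral_gauss01 (g : ℝ → ℝ) :
    ∫ t, g t ∂(gaussianReal 0 1) = ∫ t, gaussianPDFReal 0 1 t * g t := by
  rw [gaussianReal_of_var_ne_zero 0 one_ne_zero]
  have : gaussianPDF 0 1 = fun x => ((Real.toNNReal (gaussianPDFReal 0 1 x) : ℝ≥0) : ℝ≥0∞) := rfl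
  rw [this, integral_withDensity_eq_integral_smul
    ((measurable_gaussianPDFReal 0 1).real_toNNReal) g]
  congr 1
  funext x
  rw [NNReal.smul_def, Real.coe_toNNReal _ (gaussianPDFReal_nonneg 0 1 x), smul_eq_mul]

noncomputable def M (n : ℕ) : ℝ := ∫ t, t ^ n ∂(gaussianReal 0 1)

lemma M_eq (n : ℕ) : M n = (Real.sqrt (2 * π))⁻¹ * J n := by
  rw [M, integral_gauss01, J, ← integral_const_mul]
  congr 1
  funext x
  rw [pdf01_eq]
  ring

lemma sqrt_two_pi_pos : (0 : ℝ) < Real.sqrt (2 * π) :=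
  Real.sqrt_pos.2 (by positivity)

lemma M_zero : M 0 = 1 := by
  rw [M_eq, J_zero, inv_mul_cancel₀ sqrt_two_pi_pos.ne']

lemma M_one : M 1 = 0 := by rw [M_eq, J_odd 1 rfl, mul_zero]

lemma M_two : M 2 = 1 := by
  rw [M_eq, J_two, inv_mul_cancel₀ sqrt_two_pi_pos.ne']

lemma M_three : M 3 = 0 := by rw [M_eq, J_odd 3 rfl, mul_zero]

lemma M_four : M 4 = 3 := by
  rw [M_eq, J_four, ← mul_assoc, mul_comm _ 3, mul_assoc,
    inv_mul_cancel₀ sqrt_two_pi_pos.ne', mul_one]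

lemma integrable_pow_gauss (n : ℕ) :
    Integrable (fun t : ℝ => t ^ n) (gaussianReal 0 1) := by
  rw [gaussianReal_of_var_ne_zero 0 one_ne_zero]
  have : gaussianPDF 0 1 = fun x => ((Real.toNNReal (gaussianPDFReal 0 1 x) : ℝ≥0) : ℝ≥0∞) := rfl
  rw [this, integrable_withDensity_iff_integrable_smul
    ((measurable_gaussianPDFReal 0 1).real_toNNReal)]
  have heq : (fun x : ℝ => (Real.toNNReal (gaussianPDFReal 0 1 x) : ℝ≥0) • x ^ n)
      = fun x : ℝ => (Real.sqrt (2 * π))⁻¹ * (x ^ n * Real.exp (-(x ^ 2) / 2)) := by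
    funext x
    rw [NNReal.smul_def, Real.coe_toNNReal _ (gaussianPDFReal_nonneg 0 1 x), smul_eq_mul,
      pdf01_eq]
    ring
  rw [heq]
  exact (integrable_J n).const_mul _

end RSMI

namespace RSMI

noncomputable def piG (D : ℕ) : Measure (Fin D → ℝ) :=
  Measure.pi (fun _ : Fin D => gaussianReal 0 1)

lemma integral_piG_prod {D : ℕ} (f : Fin D → ℝ → ℝ) :
    ∫ x : Fin D → ℝ, ∏ i, f i (x i) ∂(piG D) = ∏ i, ∫ t, f i t ∂(gaussianReal 0 1) :=
  MeasureTheory.integral_fintype_prod_eq_prod (E := fun _ => ℝ) f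
    (μ := fun _ => gaussianReal 0 1)

lemma integrable_piG_prod {D : ℕ} (f : Fin D → ℝ → ℝ)
    (hf : ∀ i, Integrable (f i) (gaussianReal 0 1)) :
    Integrable (fun x : Fin D → ℝ => ∏ i, f i (x i)) (piG D) :=
  MeasureTheory.Integrable.fintype_prod (f := f)
    (μ := fun _ => gaussianReal 0 1) hf

/-- multiplicity exponent -/
def e {D : ℕ} (a i : Fin D) : ℕ := if i = a then 1 else 0

lemma mono_eq {D : ℕ} (a b c d : Fin D) (x : Fin D → ℝ) :
    x a * x b * x c * x d = ∏ i, x i ^ (e a i + e b i + e c i + e d i) := by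
  simp only [e, pow_add, Finset.prod_mul_distrib, pow_ite, pow_one, pow_zero,
    Finset.prod_ite_eq', Finset.mem_univ, if_true]

lemma integrable_mono {D : ℕ} (a b c d : Fin D) :
    Integrable (fun x : Fin D → ℝ => x a * x b * x c * x d) (piG D) := by
  have h := integrable_piG_prod (fun i => fun t : ℝ => t ^ (e a i + e b i + e c i + e d i))
    (fun i => integrable_pow_gauss _)
  simpa only [← mono_eq] using h

lemma integral_mono_eq_prod {D : ℕ} (a b c d : Fin D) :
    ∫ x, x a * x b * x c * x d ∂(piG D) = ∏ i, M (e a i + e b i + e c i + e d i) := by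
  have h := integral_piG_prod (fun i => fun t : ℝ => t ^ (e a i + e b i + e c i + e d i))
  simp only [← mono_eq] at h
  exact h

end RSMI

namespace RSMI

lemma prod_M_eq {D : ℕ} (a b c d : Fin D) :
    ∏ i, M (e a i + e b i + e c i + e d i)
      = (if a = b then (1:ℝ) else 0) * (if c = d then 1 else 0)
        + (if a = c then 1 else 0) * (if b = d then 1 else 0)
        + (if a = d then 1 else 0) * (if b = c then 1 else 0) := by
  by_cases hab : a = b
  · subst hab
    by_cases hac : a = c
    · subst hac
      by_cases had : a = d
      · subst had
        rw [Finset.prod_eq_single a (fun i _ hi => by simp [e, hi, M_zero])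
          (fun h => absurd (Finset.mem_univ a) h)]
        simp [e, M_four]
        norm_num
      · have hda : ¬ d = a := fun h => had h.symm
        rw [Finset.prod_eq_zero (Finset.mem_univ d) (by simp [e, hda, M_one])]
        simp [had]
    · by_cases had : a = d
      · subst had
        have hca : ¬ c = a := fun h => hac h.symm
        rw [Finset.prod_eq_zero (Finset.mem_univ c) (by simp [e, hca, M_one])]
        simp [hac, hca]
      · by_cases hcd : c = d
        · subst hcd
          have hca : ¬ c = a := fun h => hac h.symm
          rw [Finset.prod_eq_one (fun i _ => ?_)]
          · simp [hac]
          · by_cases hia : i = a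
            · subst hia; simp [e, hac, M_two]
            · by_cases hic : i = c
              · subst hic; simp [e, hca, M_two]
              · simp [e, hia, hic, M_zero]
        · have hca : ¬ c = a := fun h => hac h.symm
          have hcd' : ¬ c = d := hcd
          rw [Finset.prod_eq_zero (Finset.mem_univ c) (by simp [e, hca, hcd', M_one])]
          simp [hac, hcd]
  · by_cases hac : a = c
    · subst hac
      by_cases hbd : b = d
      · subst hbd
        have hba : ¬ b = a := fun h => hab h.symm
        rw [Finset.prod_eq_one (fun i _ => ?_)]
        · simp [hab]
        · by_cases hia : i = a
          · subst hia; simp [e, hab, M_two]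
          · by_cases hib : i = b
            · subst hib; simp [e, hba, M_two]
            · simp [e, hia, hib, M_zero]
      · have hba : ¬ b = a := fun h => hab h.symm
        have hbd' : ¬ b = d := hbd
        rw [Finset.prod_eq_zero (Finset.mem_univ b) (by simp [e, hba, hbd', M_one])]
        simp [hab, hbd, hba]
    · by_cases had : a = d
      · subst had
        by_cases hbc : b = c
        · subst hbc
          have hba : ¬ b = a := fun h => hab h.symm
          rw [Finset.prod_eq_one (fun i _ => ?_)]
          · simp [hab, hac]
          · by_cases hia : i = a
            · subst hia; simp [e, hab, M_two]
            · by_cases hib : i = b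
              · subst hib; simp [e, hba, M_two]
              · simp [e, hia, hib, M_zero]
        · have hba : ¬ b = a := fun h => hab h.symm
          have hbc' : ¬ b = c := hbc
          rw [Finset.prod_eq_zero (Finset.mem_univ b) (by simp [e, hba, hbc', M_one])]
          simp [hab, hac, hbc]
      · have hba : ¬ b = a := fun h => hab h.symm
        have hca : ¬ c = a := fun h => hac h.symm
        have hda : ¬ d = a := fun h => had h.symm
        rw [Finset.prod_eq_zero (Finset.mem_univ a) (by simp [e, hab, hac, had, M_one])]
        simp [hab, hac, had]

lemma integral_mono {D : ℕ} (a b c d : Fin D) :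
    ∫ x, x a * x b * x c * x d ∂(piG D)
      = (if a = b then (1:ℝ) else 0) * (if c = d then 1 else 0)
        + (if a = c then 1 else 0) * (if b = d then 1 else 0)
        + (if a = d then 1 else 0) * (if b = c then 1 else 0) := by
  rw [integral_mono_eq_prod, prod_M_eq]

end RSMI


end RSMIAux

/-- The approximation-error identity of Theorem 3.3:
`E[⟨Δ, X⟩² φ φᵀ] = ‖Δ‖² Σ` when `Δ` is orthogonal to the columns of `P`,
where `φ(x) = Pᵀ x` and `Σ = Pᵀ P`. -/
theorem residual_second_moment_identity
    {Ω : Type*} [MeasurableSpace Ω] (μ : Measure Ω) [IsProbabilityMeasure μ]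
    (D R : ℕ) (X : Ω → (Fin D → ℝ))
    (hX : Measure.map X μ = Measure.pi (fun _ : Fin D => gaussianReal 0 1))
    (P : Matrix (Fin D) (Fin R) ℝ)
    (Δ : Fin D → ℝ) (hΔ : Pᵀ.mulVec Δ = 0)
    (φ : Ω → Fin R → ℝ) (hφ : ∀ ω, φ ω = Pᵀ.mulVec (X ω)) :
    ∀ r s : Fin R,
      ∫ ω, (∑ i, Δ i * X ω i) ^ 2 * (φ ω r * φ ω s) ∂μ
        = (∑ i, (Δ i) ^ 2) * (Pᵀ * P) r s := by
  intro r s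
  -- orthogonality in sum form
  have hC : ∀ t : Fin R, (∑ j, Δ j * P j t) = 0 := by
    intro t
    have h := congrFun hΔ t
    simp only [Matrix.mulVec, dotProduct, Matrix.transpose_apply, Pi.zero_apply] at h
    rw [← h]
    exact Finset.sum_congr rfl fun j _ => mul_comm _ _
  -- the integrand as a function of X ω
  set F : (Fin D → ℝ) → ℝ :=
    fun x => (∑ i, Δ i * x i) ^ 2 * ((∑ j, P j r * x j) * (∑ k, P k s * x k)) with hF
  have hφω : ∀ ω, φ ω r * φ ω s = (∑ j, P j r * X ω j) * (∑ k, P k s * X ω k) := by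
    intro ω
    rw [hφ]
    simp only [Matrix.mulVec, dotProduct, Matrix.transpose_apply]
  have hXae : AEMeasurable X μ := by
    by_contra h
    rw [Measure.map_of_not_aemeasurable h] at hX
    have h0 := congrArg (fun m : Measure (Fin D → ℝ) => m Set.univ) hX
    simp [measure_univ] at h0
  have hFmeas : Measurable F := by fun_prop
  have hchg : ∫ ω, (∑ i, Δ i * X ω i) ^ 2 * (φ ω r * φ ω s) ∂μ
      = ∫ x, F x ∂(RSMI.piG D) := by
    rw [show RSMI.piG D = Measure.map X μ from hX ▸ rfl]
    rw [integral_map hXae hFmeas.aestronglyMeasurable]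
    exact integral_congr_ae (Filter.Eventually.of_forall fun ω => by
      simp only [hF]
      rw [hφω ω])
  rw [hchg]
  -- expand F
  have hFx : ∀ x : Fin D → ℝ, F x
      = ∑ i, ∑ j, ∑ k, ∑ l, Δ l * Δ k * P j r * P i s * (x i * x j * x k * x l) := by
    intro x
    rw [hF]
    simp only [sq, Finset.sum_mul, Finset.mul_sum]
    refine Finset.sum_congr rfl fun i _ => ?_
    refine Finset.sum_congr rfl fun j _ => ?_
    refine Finset.sum_congr rfl fun k _ => ?_
    refine Finset.sum_congr rfl fun l _ => ?_
    ring
  have hI3 : ∀ i j k : Fin D, Integrable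
      (fun x : Fin D → ℝ => ∑ l, Δ l * Δ k * P j r * P i s * (x i * x j * x k * x l))
      (RSMI.piG D) :=
    fun i j k => integrable_finset_sum _
      (fun l _ => (RSMI.integrable_mono i j k l).const_mul _)
  have hI2 : ∀ i j : Fin D, Integrable
      (fun x : Fin D → ℝ => ∑ k, ∑ l, Δ l * Δ k * P j r * P i s * (x i * x j * x k * x l))
      (RSMI.piG D) :=
    fun i j => integrable_finset_sum _ (fun k _ => hI3 i j k)
  have hI1 : ∀ i : Fin D, Integrable
      (fun x : Fin D → ℝ => ∑ j, ∑ k, ∑ l, Δ l * Δ k * P j r * P i s * (x i * x j * x k * x l))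
      (RSMI.piG D) :=
    fun i => integrable_finset_sum _ (fun j _ => hI2 i j)
  have key : ∫ x, F x ∂(RSMI.piG D)
      = ∑ i, ∑ j, ∑ k, ∑ l, Δ l * Δ k * P j r * P i s *
          ((if i = j then (1:ℝ) else 0) * (if k = l then 1 else 0)
            + (if i = k then 1 else 0) * (if j = l then 1 else 0)
            + (if i = l then 1 else 0) * (if j = k then 1 else 0)) := by
    simp only [hFx]
    rw [integral_finset_sum _ (fun i _ => hI1 i)]
    refine Finset.sum_congr rfl fun i _ => ?_
    rw [integral_finset_sum _ (fun j _ => hI2 i j)]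
    refine Finset.sum_congr rfl fun j _ => ?_
    rw [integral_finset_sum _ (fun k _ => hI3 i j k)]
    refine Finset.sum_congr rfl fun k _ => ?_
    rw [integral_finset_sum _ (fun l _ => (RSMI.integrable_mono i j k l).const_mul _)]
    refine Finset.sum_congr rfl fun l _ => ?_
    rw [integral_const_mul, RSMI.integral_mono]
  rw [key]
  simp only [mul_add, Finset.sum_add_distrib]
  simp only [mul_ite, ite_mul, mul_zero, zero_mul, mul_one, one_mul,
    Finset.sum_ite_eq, Finset.sum_ite_eq', Finset.mem_univ, if_true,
    Finset.sum_const_zero, add_zero, zero_add]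
  have hT1 : (∑ x : Fin D, ∑ x1 : Fin D, ∑ x2 : Fin D,
      if x = x1 then Δ x2 * Δ x2 * P x1 r * P x s else 0)
      = (∑ i, Δ i * Δ i) * (∑ j, P j r * P j s) := by
    refine Eq.trans (Finset.sum_congr rfl fun x _ => Finset.sum_comm) ?_
    simp only [Finset.sum_ite_eq, Finset.mem_univ, if_true]
    rw [Finset.sum_comm, Finset.sum_mul_sum]
    exact Finset.sum_congr rfl fun i _ => Finset.sum_congr rfl fun j _ => by ring
  have hT2 : (∑ x : Fin D, ∑ x1 : Fin D, Δ x1 * Δ x * P x1 r * P x s) = 0 := by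
    have h2 : (∑ x : Fin D, ∑ x1 : Fin D, Δ x1 * Δ x * P x1 r * P x s)
        = (∑ x : Fin D, Δ x * P x s) * (∑ x1 : Fin D, Δ x1 * P x1 r) := by
      rw [Finset.sum_mul_sum]
      exact Finset.sum_congr rfl fun x _ => Finset.sum_congr rfl fun x1 _ => by ring
    rw [h2, hC s, zero_mul]
  have step : ∀ x x1 : Fin D, (∑ x2 : Fin D, ∑ x3 : Fin D,
      if x1 = x2 then if x = x3 then Δ x3 * Δ x2 * P x1 r * P x s else 0 else 0)
      = Δ x * Δ x1 * P x1 r * P x s := by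
    intro x x1
    rw [Finset.sum_eq_single x1]
    · simp [Finset.sum_ite_eq, Finset.mem_univ]
    · intro b _ hb
      have hnb : ¬ x1 = b := fun h => hb h.symm
      simp [hnb]
    · intro h
      exact absurd (Finset.mem_univ x1) h
  have hT3 : (∑ x : Fin D, ∑ x1 : Fin D, ∑ x2 : Fin D, ∑ x3 : Fin D,
      if x1 = x2 then if x = x3 then Δ x3 * Δ x2 * P x1 r * P x s else 0 else 0) = 0 := by
    have h3 : (∑ x : Fin D, ∑ x1 : Fin D, ∑ x2 : Fin D, ∑ x3 : Fin D,
        if x1 = x2 then if x = x3 then Δ x3 * Δ x2 * P x1 r * P x s else 0 else 0)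
        = ∑ x : Fin D, ∑ x1 : Fin D, Δ x * Δ x1 * P x1 r * P x s :=
      Finset.sum_congr rfl fun x _ => Finset.sum_congr rfl fun x1 _ => step x x1
    have h4 : (∑ x : Fin D, ∑ x1 : Fin D, Δ x * Δ x1 * P x1 r * P x s)
        = (∑ x : Fin D, Δ x * P x s) * (∑ x1 : Fin D, Δ x1 * P x1 r) := by
      rw [Finset.sum_mul_sum]
      exact Finset.sum_congr rfl fun x _ => Finset.sum_congr rfl fun x1 _ => by ring
    rw [h3, h4, hC s, zero_mul]
  rw [hT1, hT2, hT3, add_zero, add_zero]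
  simp only [Matrix.mul_apply, Matrix.transpose_apply, pow_two]
end

section
/- Let A be an n × n real symmetric matrix and Q an n × m real matrix with Qᵀ * Q = 1 (the m × m identity), so that m ≤ n. Let λ_1 ≥ λ_2 ≥ ⋯ ≥ λ_n be the eigenvalues of A in nonincreasing order and μ_1 ≥ μ_2 ≥ ⋯ ≥ μ_m the eigenvalues of Qᵀ * A * Q in nonincreasing order (each with multiplicity). Then μ_r ≤ λ_r for every r = 1, …, m. -/
open Matrix
open scoped BigOperators
open scoped InnerProductSpace

section CauchyInterlacingAux

variable {k l : ℕ}


-- composition of toEuclideanLin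
lemma toEL_mul {j : ℕ} (M : Matrix (Fin k) (Fin l) ℝ) (N : Matrix (Fin l) (Fin j) ℝ)
    (v : EuclideanSpace ℝ (Fin j)) :
    Matrix.toEuclideanLin (M * N) v = Matrix.toEuclideanLin M (Matrix.toEuclideanLin N v) := by
  simp [Matrix.toEuclideanLin_apply, Matrix.mulVec_mulVec]

lemma toEL_one (v : EuclideanSpace ℝ (Fin k)) :
    Matrix.toEuclideanLin (1 : Matrix (Fin k) (Fin k) ℝ) v = v := by
  simp [Matrix.toEuclideanLin_apply]

-- repr of x vanishes off s if x in span of subfamily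
lemma repr_zero_of_span {E : Type*} [NormedAddCommGroup E] [InnerProductSpace ℝ E]
    (b : OrthonormalBasis (Fin k) ℝ E) (s : Finset (Fin k))
    (x : E) (hx : x ∈ Submodule.span ℝ (Set.range fun i : s => b i))
    (j : Fin k) (hj : j ∉ s) : b.repr x j = 0 := by
  have hxo : x ∈ (ℝ ∙ (b j))ᗮ := by
    refine Submodule.span_le.2 ?_ hx
    rintro _ ⟨i, rfl⟩
    rw [SetLike.mem_coe, Submodule.mem_orthogonal_singleton_iff_inner_right]
    exact b.orthonormal.2 (fun h => hj (h ▸ i.2))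
  rw [b.repr_apply_apply]
  exact Submodule.mem_orthogonal_singleton_iff_inner_right.1 hxo

lemma toEL_eigen (M : Matrix (Fin k) (Fin k) ℝ) (hM : M.IsHermitian) (i : Fin k) :
    Matrix.toEuclideanLin M (hM.eigenvectorBasis i)
      = hM.eigenvalues i • hM.eigenvectorBasis i := by
  have h := hM.mulVec_eigenvectorBasis i
  apply (WithLp.equiv 2 _).injective
  simpa [Matrix.toEuclideanLin_apply] using h

lemma repr_toEL (M : Matrix (Fin k) (Fin k) ℝ) (hM : M.IsHermitian)
    (x : EuclideanSpace ℝ (Fin k)) (i : Fin k) :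
    hM.eigenvectorBasis.repr (Matrix.toEuclideanLin M x) i
      = hM.eigenvalues i * hM.eigenvectorBasis.repr x i := by
  have hsym := Matrix.isHermitian_iff_isSymmetric.1 hM
  rw [OrthonormalBasis.repr_apply_apply, OrthonormalBasis.repr_apply_apply,
    ← hsym (hM.eigenvectorBasis i) x, toEL_eigen M hM i, real_inner_smul_left]

lemma inner_toEL (M : Matrix (Fin k) (Fin k) ℝ) (hM : M.IsHermitian)
    (x : EuclideanSpace ℝ (Fin k)) :
    ⟪x, Matrix.toEuclideanLin M x⟫_ℝ
      = ∑ i, hM.eigenvalues i * (hM.eigenvectorBasis.repr x i)^2 := by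
  rw [← hM.eigenvectorBasis.repr.inner_map_map x (Matrix.toEuclideanLin M x)]
  rw [PiLp.inner_apply]
  refine Finset.sum_congr rfl fun i _ => ?_
  rw [repr_toEL]
  simp [sq]
  ring

lemma inner_self_repr {E : Type*} [NormedAddCommGroup E] [InnerProductSpace ℝ E]
    (b : OrthonormalBasis (Fin k) ℝ E) (x : E) :
    ⟪x, x⟫_ℝ = ∑ i, (b.repr x i)^2 := by
  rw [← b.repr.inner_map_map x x, PiLp.inner_apply]
  refine Finset.sum_congr rfl fun i _ => ?_
  simp [sq]

lemma quad_le (M : Matrix (Fin k) (Fin k) ℝ) (hM : M.IsHermitian)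
    (s : Finset (Fin k)) (c : ℝ) (hs : ∀ i ∈ s, hM.eigenvalues i ≤ c)
    (x : EuclideanSpace ℝ (Fin k))
    (hx : x ∈ Submodule.span ℝ (Set.range fun i : s => hM.eigenvectorBasis i)) :
    ⟪x, Matrix.toEuclideanLin M x⟫_ℝ ≤ c * ⟪x, x⟫_ℝ := by
  rw [inner_toEL M hM, inner_self_repr hM.eigenvectorBasis, Finset.mul_sum]
  refine Finset.sum_le_sum fun i _ => ?_
  by_cases hi : i ∈ s
  · exact mul_le_mul_of_nonneg_right (hs i hi) (sq_nonneg _)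
  · rw [repr_zero_of_span hM.eigenvectorBasis s x hx i hi]
    simp

lemma quad_ge (M : Matrix (Fin k) (Fin k) ℝ) (hM : M.IsHermitian)
    (s : Finset (Fin k)) (c : ℝ) (hs : ∀ i ∈ s, c ≤ hM.eigenvalues i)
    (x : EuclideanSpace ℝ (Fin k))
    (hx : x ∈ Submodule.span ℝ (Set.range fun i : s => hM.eigenvectorBasis i)) :
    c * ⟪x, x⟫_ℝ ≤ ⟪x, Matrix.toEuclideanLin M x⟫_ℝ := by
  rw [inner_toEL M hM, inner_self_repr hM.eigenvectorBasis, Finset.mul_sum]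
  refine Finset.sum_le_sum fun i _ => ?_
  by_cases hi : i ∈ s
  · exact mul_le_mul_of_nonneg_right (hs i hi) (sq_nonneg _)
  · rw [repr_zero_of_span hM.eigenvectorBasis s x hx i hi]
    simp

-- finrank of span of orthonormal subfamily
lemma finrank_span_onb {E : Type*} [NormedAddCommGroup E] [InnerProductSpace ℝ E]
    (b : OrthonormalBasis (Fin k) ℝ E) (s : Finset (Fin k)) :
    Module.finrank ℝ (Submodule.span ℝ (Set.range fun i : s => b i)) = s.card := by
  have h : (fun i : s => b i) = ⇑b ∘ Subtype.val := rfl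
  rw [h, finrank_span_eq_card ((b.orthonormal.linearIndependent).comp _ Subtype.val_injective)]
  simp

lemma count_filter_eq {k : ℕ} (f g : Fin k → ℝ)
    (h : Finset.univ.val.map f = Finset.univ.val.map g)
    (p : ℝ → Prop) [DecidablePred p] :
    (Finset.univ.filter fun i => p (f i)).card
      = (Finset.univ.filter fun i => p (g i)).card := by
  have h2 := congrArg (Multiset.countP p) h
  rw [Multiset.countP_map, Multiset.countP_map] at h2
  exact h2


end CauchyInterlacingAux


/-- Cauchy interlacing / Poincaré separation inequality for an orthogonal
compression `Qᵀ A Q` of a real symmetric matrix `A`: with eigenvalues listed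
in nonincreasing order (with multiplicity), `μ_r ≤ λ_r` for every `r`. -/
theorem cauchy_interlacing_orthogonal_compression
    (n m : ℕ) (A : Matrix (Fin n) (Fin n) ℝ) (hA : A.IsHermitian)
    (Q : Matrix (Fin n) (Fin m) ℝ) (hQ : Qᵀ * Q = 1)
    (hB : (Qᵀ * A * Q).IsHermitian)
    (lam : Fin n → ℝ)
    (hlam_mono : ∀ i j : Fin n, i ≤ j → lam j ≤ lam i)
    (hlam : Finset.univ.val.map lam = Finset.univ.val.map hA.eigenvalues)
    (mu : Fin m → ℝ)
    (hmu_mono : ∀ i j : Fin m, i ≤ j → mu j ≤ mu i)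
    (hmu : Finset.univ.val.map mu = Finset.univ.val.map hB.eigenvalues) :
    ∃ hmn : m ≤ n, ∀ r : Fin m, mu r ≤ lam (Fin.castLE hmn r) := by
  classical
  set QL := Matrix.toEuclideanLin Q with hQL
  have hQinj : Function.Injective QL := by
    intro y z hyz
    have h2 := congrArg (Matrix.toEuclideanLin Qᵀ) hyz
    rw [← toEL_mul, ← toEL_mul, hQ, toEL_one, toEL_one] at h2
    exact h2
  have hmn : m ≤ n := by
    have := LinearMap.finrank_le_finrank_of_injective hQinj
    simpa using this
  refine ⟨hmn, fun r => ?_⟩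
  set r' : Fin n := Fin.castLE hmn r with hr'
  -- index sets
  set Sl : Finset (Fin n) := Finset.univ.filter (fun i => hA.eigenvalues i ≤ lam r') with hSl
  set Sm : Finset (Fin m) := Finset.univ.filter (fun j => mu r ≤ hB.eigenvalues j) with hSm
  have hSlcard : n - (r : ℕ) ≤ Sl.card := by
    rw [hSl, ← count_filter_eq lam hA.eigenvalues hlam (fun t => t ≤ lam r')]
    have hsub : Finset.Ici r' ⊆ Finset.univ.filter (fun i => lam i ≤ lam r') := by
      intro i hi
      simp only [Finset.mem_filter, Finset.mem_univ, true_and]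
      exact hlam_mono r' i (Finset.mem_Ici.1 hi)
    have := Finset.card_le_card hsub
    rwa [Fin.card_Ici] at this
  have hSmcard : (r : ℕ) + 1 ≤ Sm.card := by
    rw [hSm, ← count_filter_eq mu hB.eigenvalues hmu (fun t => mu r ≤ t)]
    have hsub : Finset.Iic r ⊆ Finset.univ.filter (fun j => mu r ≤ mu j) := by
      intro j hj
      simp only [Finset.mem_filter, Finset.mem_univ, true_and]
      exact hmu_mono j r (Finset.mem_Iic.1 hj)
    have := Finset.card_le_card hsub
    rwa [Fin.card_Iic] at this
  -- subspaces
  set T : Submodule ℝ (EuclideanSpace ℝ (Fin n)) :=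
    Submodule.span ℝ (Set.range fun i : Sl => hA.eigenvectorBasis i) with hT
  set U : Submodule ℝ (EuclideanSpace ℝ (Fin m)) :=
    Submodule.span ℝ (Set.range fun j : Sm => hB.eigenvectorBasis j) with hU
  set U' : Submodule ℝ (EuclideanSpace ℝ (Fin n)) := U.map QL with hU'
  have hTrank : Module.finrank ℝ T = Sl.card := finrank_span_onb _ _
  have hUrank : Module.finrank ℝ U = Sm.card := finrank_span_onb _ _
  have hU'rank : Module.finrank ℝ U' = Sm.card := by
    rw [← hUrank]
    exact (LinearEquiv.finrank_eq (Submodule.equivMapOfInjective QL hQinj U)).symm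
  -- nontrivial intersection
  have hsum := Submodule.finrank_sup_add_finrank_inf_eq U' T
  have hsup : Module.finrank ℝ ↥(U' ⊔ T) ≤ n := by
    have := Submodule.finrank_le (U' ⊔ T)
    simpa using this
  have hpos : 0 < Module.finrank ℝ ↥(U' ⊓ T) := by
    have hrn : (r : ℕ) < n := lt_of_lt_of_le r.isLt hmn
    omega
  have hne : (U' ⊓ T) ≠ ⊥ := by
    intro h
    rw [h, finrank_bot] at hpos
    exact lt_irrefl 0 hpos
  obtain ⟨x, hxmem, hx0⟩ := Submodule.exists_mem_ne_zero_of_ne_bot hne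
  have hxT : x ∈ T := hxmem.2
  obtain ⟨y, hyU, hyx⟩ := hxmem.1
  have hy0 : y ≠ 0 := by
    intro h
    apply hx0
    rw [← hyx, h, map_zero]
  -- quadratic bounds
  have hupper : ⟪x, Matrix.toEuclideanLin A x⟫_ℝ ≤ lam r' * ⟪x, x⟫_ℝ := by
    refine quad_le A hA Sl (lam r') (fun i hi => ?_) x hxT
    exact (Finset.mem_filter.1 hi).2
  have hlower : mu r * ⟪y, y⟫_ℝ ≤ ⟪y, Matrix.toEuclideanLin (Qᵀ * A * Q) y⟫_ℝ := by
    refine quad_ge (Qᵀ * A * Q) hB Sm (mu r) (fun j hj => ?_) y hyU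
    exact (Finset.mem_filter.1 hj).2
  -- bridge
  have hadj : LinearMap.adjoint QL = Matrix.toEuclideanLin Qᵀ := by
    rw [← Q.conjTranspose_eq_transpose_of_trivial,
      Matrix.toEuclideanLin_conjTranspose_eq_adjoint]
  have hbridge1 : ⟪x, Matrix.toEuclideanLin A x⟫_ℝ
      = ⟪y, Matrix.toEuclideanLin (Qᵀ * A * Q) y⟫_ℝ := by
    rw [← hyx, ← LinearMap.adjoint_inner_right QL, hadj,
      toEL_mul (Qᵀ * A) Q, toEL_mul Qᵀ A]
  have hbridge2 : ⟪x, x⟫_ℝ = ⟪y, y⟫_ℝ := by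
    rw [← hyx, ← LinearMap.adjoint_inner_right QL, hadj, ← toEL_mul, hQ, toEL_one]
  -- conclude
  have hyy : 0 < ⟪y, y⟫_ℝ := by
    rw [real_inner_self_eq_norm_sq]
    have : ‖y‖ ≠ 0 := norm_ne_zero_iff.2 hy0
    positivity
  have : mu r * ⟪y, y⟫_ℝ ≤ lam r' * ⟪y, y⟫_ℝ := by
    calc mu r * ⟪y, y⟫_ℝ ≤ ⟪y, Matrix.toEuclideanLin (Qᵀ * A * Q) y⟫_ℝ := hlower
      _ = ⟪x, Matrix.toEuclideanLin A x⟫_ℝ := hbridge1.symm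
      _ ≤ lam r' * ⟪x, x⟫_ℝ := hupper
      _ = lam r' * ⟪y, y⟫_ℝ := by rw [hbridge2]
  exact le_of_mul_le_mul_right this hyy
end

section
/- Fix M ≥ 1, dimensions I : Fin M → ℕ, K ≥ 1, and ranks R : Fin K → ℕ. For each k : Fin K and r : Fin (R k), let v k r : (Π m : Fin M, Fin (I m)) → ℝ be a rank-one tensor (v k r idx = ∏ m, β k r m (idx m) for some component vectors β k r m : Fin (I m) → ℝ). Define the ensemble-averaged tensor B̄ = (1/K) • ∑ k, ∑ r, v k r, and let d be the dimension (finrank over ℝ) of the span of the family {v k r}. Then d ≤ ∑ k, R k, and there exist d rank-one tensors u_1, …, u_d with B̄ = ∑_{j=1}^{d} u_j; moreover, if for some k the family (v k r)_{r : Fin (R k)} is linearly independent, then R k ≤ d. -/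
open scoped BigOperators

/-- A scalar multiple of a rank-one tensor is rank-one (absorb the scalar into
the 0-th factor; uses `1 ≤ M`). -/
lemma smul_rank_one {M : ℕ} (hM : 1 ≤ M) (I : Fin M → ℕ)
    (w : ((m : Fin M) → Fin (I m)) → ℝ) (c : ℝ)
    (h : ∃ β : (m : Fin M) → Fin (I m) → ℝ, ∀ idx, w idx = ∏ m, β m (idx m)) :
    ∃ β : (m : Fin M) → Fin (I m) → ℝ, ∀ idx, (c • w) idx = ∏ m, β m (idx m) := by
  classical
  obtain ⟨β, hβ⟩ := h
  set m0 : Fin M := ⟨0, hM⟩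
  refine ⟨fun m i => (if m = m0 then c else 1) * β m i, fun idx => ?_⟩
  have hdistrib : (∏ m, (if m = m0 then c else 1) * β m (idx m))
      = (∏ m, (if m = m0 then c else 1)) * ∏ m, β m (idx m) := by
    rw [Finset.prod_mul_distrib]
  rw [hdistrib]
  have h1 : (∏ m, (if m = m0 then c else 1)) = c := by
    rw [Finset.prod_ite_eq' Finset.univ m0 (fun _ => c)]
    simp
  rw [h1, ← hβ]
  simp [mul_comm]

/-- Lemma 5.1: the ensemble-averaged coefficient tensor of `K` CP learners with
ranks `R 1, …, R K` admits a CP representation whose number of rank-one terms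
`d` (the dimension of the span of all components) satisfies
`max_k R k ≤ d ≤ ∑ k, R k`. -/
theorem ensemble_averaged_cp_representation
    (M : ℕ) (hM : 1 ≤ M) (I : Fin M → ℕ) (K : ℕ) (hK : 1 ≤ K)
    (R : Fin K → ℕ)
    (v : (k : Fin K) → Fin (R k) → (((m : Fin M) → Fin (I m)) → ℝ))
    (hrank1 : ∀ k r, ∃ β : (m : Fin M) → Fin (I m) → ℝ,
      ∀ idx, v k r idx = ∏ m, β m (idx m))
    (Bbar : ((m : Fin M) → Fin (I m)) → ℝ)
    (hB : Bbar = (1 / (K : ℝ)) • ∑ k, ∑ r, v k r)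
    (d : ℕ)
    (hd : d = Module.finrank ℝ
      (Submodule.span ℝ (Set.range fun p : Σ k : Fin K, Fin (R k) => v p.1 p.2))) :
    d ≤ ∑ k, R k ∧
    (∃ u : Fin d → (((m : Fin M) → Fin (I m)) → ℝ),
      (∀ j, ∃ β : (m : Fin M) → Fin (I m) → ℝ,
        ∀ idx, u j idx = ∏ m, β m (idx m)) ∧
      Bbar = ∑ j, u j) ∧
    (∀ k, LinearIndependent ℝ (v k) → R k ≤ d) := by
  classical
  set f : (Σ k : Fin K, Fin (R k)) → (((m : Fin M) → Fin (I m)) → ℝ) :=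
    fun p => v p.1 p.2 with hf
  -- Part 1 : d ≤ ∑ k, R k
  have h1 : d ≤ ∑ k, R k := by
    have h := finrank_range_le_card (R := ℝ) f
    rw [Set.finrank] at h
    simpa [hd, hf, Fintype.card_sigma] using h
  refine ⟨h1, ?_, ?_⟩
  · -- Part 2 : existence of a CP representation with d rank-one terms
    obtain ⟨b, hbs, hspan, hli⟩ := exists_linearIndependent ℝ (Set.range f)
    have hbfin : b.Finite := (Set.finite_range f).subset hbs
    haveI : Fintype b := hbfin.fintype
    have hcard : d = b.toFinset.card := by
      rw [hd, ← hspan, finrank_span_set_eq_card hli]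
    -- Bbar lies in the span of the family, hence of b
    have hBmem : Bbar ∈ Submodule.span ℝ b := by
      rw [hspan, hB]
      refine Submodule.smul_mem _ _ (Submodule.sum_mem _ fun k _ =>
        Submodule.sum_mem _ fun r _ => ?_)
      exact Submodule.subset_span ⟨⟨k, r⟩, rfl⟩
    obtain ⟨c, hcsupp, hcsum⟩ := Submodule.mem_span_set.mp hBmem
    -- build the equiv Fin d ≃ b
    have hcardb : Fintype.card b = d := by
      rw [hcard, Set.toFinset_card]
    let e : Fin d ≃ b := (Fintype.equivFinOfCardEq hcardb).symm
    refine ⟨fun j => c (e j) • ((e j : ((m : Fin M) → Fin (I m)) → ℝ)),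
      fun j => ?_, ?_⟩
    · -- each term is rank-one
      obtain ⟨p, hp⟩ := hbs (e j).2
      exact smul_rank_one hM I _ _ (hp ▸ hrank1 p.1 p.2)
    · -- the sum recovers Bbar
      rw [← hcsum]
      have h2 : (∑ j, c (e j) • ((e j : ((m : Fin M) → Fin (I m)) → ℝ)))
          = ∑ x : b, c x • (x : ((m : Fin M) → Fin (I m)) → ℝ) :=
        Fintype.sum_equiv e _ _ (fun j => rfl)
      have h3 : (∑ x : b, c x • (x : ((m : Fin M) → Fin (I m)) → ℝ))
          = ∑ x ∈ b.toFinset, c x • x :=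
        Finset.sum_set_coe (f := fun y => c y • y) b
      rw [h2, h3, Finsupp.sum]
      refine Finset.sum_subset ?_ ?_
      · intro x hx
        exact Set.mem_toFinset.mpr (hcsupp hx)
      · intro x _ hx
        rw [Finsupp.notMem_support_iff.mp hx, zero_smul]
  · -- Part 3 : max rank lower bound
    intro k hk
    have hle : Submodule.span ℝ (Set.range (v k)) ≤ Submodule.span ℝ (Set.range f) := by
      apply Submodule.span_mono
      rintro x ⟨r, rfl⟩
      exact ⟨⟨k, r⟩, rfl⟩
    have h3 := Submodule.finrank_mono hle
    rw [finrank_span_eq_card hk, Fintype.card_fin] at h3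
    rw [hd]
    exact h3
end
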